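/- arXiv:1701.04426 — 8 statements merged into one kernel-verified Lean document; each statement's English description precedes it below -/
import Mathlib

section
/- For every integer N ≥ 1 and all positive real link capacities ℓ_1, …, ℓ_{N+1}, the approximate capacity of the N-relay Gaussian half-duplex line network, namely the supremum over all schedules λ of the minimum over all cuts A ⊆ {1,…,N} of the cut value v_λ(A), equals min_{i∈{1,…,N}} ℓ_i·ℓ_{i+1}/(ℓ_i + ℓ_{i+1}), and this supremum is attained by some schedule. -/
open Finset

/-- Node state: node `0` always transmits (`true`), node `N+1` always receives (`false`),
and node `j` for `1 ≤ j ≤ N` takes the state of relay `j`. -/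
def nodeState (N : ℕ) (s : Fin N → Bool) (j : ℕ) : Bool :=
  if j = 0 then true else if h : j - 1 < N then s ⟨j - 1, h⟩ else false

/-- Link `i` (from node `i-1` to node `i`) is active in state `s`. -/
def linkActive (N : ℕ) (s : Fin N → Bool) (i : ℕ) : Prop :=
  nodeState N s (i - 1) = true ∧ nodeState N s i = false

instance (N : ℕ) (s : Fin N → Bool) (i : ℕ) : Decidable (linkActive N s i) := by
  unfold linkActive; infer_instance

/-- The crossing set `E(A)` of a cut `A ⊆ {1,…,N}`. -/
def crossing (N : ℕ) (A : Finset ℕ) : Finset ℕ :=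
  (Finset.Icc 1 (N + 1)).filter
    (fun i => (i ∈ A ∨ i = N + 1) ∧ (i - 1 = 0 ∨ (i - 1 ∈ Finset.Icc 1 N ∧ i - 1 ∉ A)))

/-- The value of cut `A` under schedule `lam`. -/
noncomputable def cutValue (N : ℕ) (ℓ : ℕ → ℝ) (lam : (Fin N → Bool) → ℝ)
    (A : Finset ℕ) : ℝ :=
  ∑ s : Fin N → Bool, lam s * ∑ i ∈ (crossing N A).filter (fun i => linkActive N s i), ℓ i

/-- The minimum over all cuts `A ⊆ {1,…,N}` of the cut value under schedule `lam`. -/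
noncomputable def minCut (N : ℕ) (ℓ : ℕ → ℝ) (lam : (Fin N → Bool) → ℝ) : ℝ :=
  ((Finset.Icc 1 N).powerset).inf' ⟨∅, by simp⟩ (cutValue N ℓ lam)

/-!
Links `i` and `i + 1` are never active together, since node `i` cannot receive and transmit at
once; so their activity fractions `pᵢ, pᵢ₊₁` satisfy `pᵢ + pᵢ₊₁ ≤ 1`. The cut `{j, …, N}` is crossed
by link `j` alone, so every schedule has min-cut value at most
`min (ℓᵢ pᵢ) (ℓᵢ₊₁ pᵢ₊₁) ≤ ℓᵢ ℓᵢ₊₁ / (ℓᵢ + ℓᵢ₊₁)`.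

Conversely, let `C` be the claimed minimum, let time run over the circle `ℝ/ℤ`, and let node `k`
transmit on an arc of length `C / ℓₖ₊₁`, the arcs of consecutive nodes placed end to end. This is
possible because `C / ℓₖ + C / ℓₖ₊₁ ≤ 1`, and then link `i` is active for at least a fraction
`C / ℓᵢ` of the time. Every cut is crossed by some link, so every cut has value at least `C`.
-/

open MeasureTheory

lemma div_add_div_le_one_iff_le_mul_div_add {a b c : ℝ} (ha : 0 < a) (hb : 0 < b) :
    c / a + c / b ≤ 1 ↔ c ≤ a * b / (a + b) := by
  rw [div_add_div _ _ ha.ne' hb.ne', div_le_one (mul_pos ha hb), le_div_iff₀ (add_pos ha hb),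
    show c * b + a * c = c * (a + b) by ring]

lemma le_mul_div_add_of_le_mul {a b p r x : ℝ} (ha : 0 < a) (hb : 0 < b) (hp : x ≤ a * p)
    (hr : x ≤ b * r) (h : p + r ≤ 1) : x ≤ a * b / (a + b) := by
  rw [← div_add_div_le_one_iff_le_mul_div_add ha hb]
  calc x / a + x / b ≤ p + r := add_le_add ((div_le_iff₀' ha).mpr hp) ((div_le_iff₀' hb).mpr hr)
    _ ≤ 1 := h

def IsSchedule (N : ℕ) (lam : (Fin N → Bool) → ℝ) : Prop :=
  (∀ s, 0 ≤ lam s) ∧ ∑ s, lam s = 1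

noncomputable def activeTime (N : ℕ) (lam : (Fin N → Bool) → ℝ) (i : ℕ) : ℝ :=
  ∑ s with linkActive N s i, lam s

section Cuts

variable {N : ℕ}

lemma activeTime_nonneg {lam : (Fin N → Bool) → ℝ} (hlam : ∀ s, 0 ≤ lam s) (i : ℕ) :
    0 ≤ activeTime N lam i :=
  sum_nonneg fun s _ => hlam s

lemma not_linkActive_and_linkActive_succ (s : Fin N → Bool) (i : ℕ) :
    ¬ (linkActive N s i ∧ linkActive N s (i + 1)) := by
  rintro ⟨⟨-, hrecv⟩, ⟨hsend, -⟩⟩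
  rw [Nat.add_sub_cancel, hrecv] at hsend
  exact Bool.false_ne_true hsend

lemma activeTime_add_activeTime_succ_le_one {lam : (Fin N → Bool) → ℝ} (hlam : IsSchedule N lam)
    (i : ℕ) : activeTime N lam i + activeTime N lam (i + 1) ≤ 1 := by
  rw [activeTime, activeTime, ← sum_union (disjoint_filter.mpr fun s _ h h' =>
    not_linkActive_and_linkActive_succ s i ⟨h, h'⟩), ← hlam.2]
  exact sum_le_sum_of_subset_of_nonneg (subset_univ _) fun s _ _ => hlam.1 s

lemma cutValue_eq_sum_activeTime (ℓ : ℕ → ℝ) (lam : (Fin N → Bool) → ℝ) (A : Finset ℕ) :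
    cutValue N ℓ lam A = ∑ i ∈ crossing N A, ℓ i * activeTime N lam i := by
  simp_rw [cutValue, activeTime, sum_filter, mul_sum]
  rw [sum_comm]
  refine sum_congr rfl fun i _ => sum_congr rfl fun s _ => ?_
  split_ifs <;> simp [mul_comm]

lemma crossing_Icc {i : ℕ} (h1 : 1 ≤ i) (h2 : i ≤ N + 1) : crossing N (Icc i N) = {i} := by
  ext j
  simp only [crossing, mem_filter, mem_Icc, mem_singleton]
  omega

lemma minCut_le_mul_activeTime (ℓ : ℕ → ℝ) (lam : (Fin N → Bool) → ℝ) {i : ℕ} (h1 : 1 ≤ i)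
    (h2 : i ≤ N + 1) : minCut N ℓ lam ≤ ℓ i * activeTime N lam i := by
  have hmem : Icc i N ∈ (Icc 1 N).powerset := mem_powerset.mpr (Icc_subset_Icc h1 le_rfl)
  calc minCut N ℓ lam ≤ cutValue N ℓ lam (Icc i N) := inf'_le _ hmem
    _ = ℓ i * activeTime N lam i := by
      rw [cutValue_eq_sum_activeTime, crossing_Icc h1 h2, sum_singleton]

lemma crossing_subset (A : Finset ℕ) : crossing N A ⊆ Icc 1 (N + 1) := filter_subset _ _

-- The least element of `A ∪ {N+1}` is the head of a crossing link.
lemma crossing_nonempty {A : Finset ℕ} (hA : A ⊆ Icc 1 N) : (crossing N A).Nonempty := by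
  have hne : (A ∪ {N + 1}).Nonempty := ⟨N + 1, by simp⟩
  set i := (A ∪ {N + 1}).min' hne
  have hi : i ∈ A ∨ i = N + 1 := by
    have := min'_mem _ hne
    rwa [mem_union, mem_singleton] at this
  have hi1 : 1 ≤ i ∧ i ≤ N + 1 := by
    rcases hi with h | h
    · have := mem_Icc.mp (hA h); omega
    · omega
  refine ⟨i, mem_filter.mpr ⟨mem_Icc.mpr hi1, hi, ?_⟩⟩
  by_cases h1 : i = 1
  · exact Or.inl (by omega)
  · refine Or.inr ⟨mem_Icc.mpr ⟨by omega, by omega⟩, fun h => ?_⟩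
    have := min'_le (A ∪ {N + 1}) (i - 1) (mem_union_left _ h)
    omega

lemma le_minCut {ℓ : ℕ → ℝ} {lam : (Fin N → Bool) → ℝ} {c : ℝ}
    (hℓ : ∀ i ∈ Icc 1 (N + 1), 0 ≤ ℓ i) (hlam : ∀ s, 0 ≤ lam s)
    (h : ∀ i ∈ Icc 1 (N + 1), c ≤ ℓ i * activeTime N lam i) : c ≤ minCut N ℓ lam := by
  refine le_inf' _ _ fun A hA => ?_
  obtain ⟨i, hi⟩ := crossing_nonempty (mem_powerset.mp hA)
  rw [cutValue_eq_sum_activeTime]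
  calc c ≤ ℓ i * activeTime N lam i := h i (crossing_subset A hi)
    _ ≤ ∑ j ∈ crossing N A, ℓ j * activeTime N lam j := single_le_sum (fun j hj =>
        mul_nonneg (hℓ j (crossing_subset A hj)) (activeTime_nonneg hlam j)) hi

end Cuts

section ArcSchedule

open scoped Classical

-- For `r ≤ 1`, the image of `(a, a + r]` in `ℝ/ℤ`, read off the representative in `(a, a + 1]`.
def arc (a r : ℝ) : Set UnitAddCircle := {y | (AddCircle.equivIoc 1 a y : ℝ) ≤ a + r}

lemma measurableSet_arc (a r : ℝ) : MeasurableSet (arc a r) :=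
  measurableSet_le (measurable_subtype_coe.comp (AddCircle.measurableEquivIoc 1 a).measurable)
    measurable_const

lemma preimage_arc_inter_Ioc {a r : ℝ} (hr : r ≤ 1) :
    (↑) ⁻¹' arc a r ∩ Set.Ioc a (a + 1) = Set.Ioc a (a + r) := by
  ext x
  have hmem : x ∈ Set.Ioc a (a + 1) → ((x : UnitAddCircle) ∈ arc a r ↔ x ≤ a + r) := fun hxI => by
    rw [arc, Set.mem_ofPred, AddCircle.equivIoc_coe_eq hxI]
  constructor
  · rintro ⟨hx, hxI⟩
    exact ⟨hxI.1, (hmem hxI).mp hx⟩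
  · intro hx
    have hxI : x ∈ Set.Ioc a (a + 1) := ⟨hx.1, hx.2.trans (by linarith)⟩
    exact ⟨(hmem hxI).mpr hx.2, hxI⟩

lemma volume_arc {a r : ℝ} (hr : r ≤ 1) : volume (arc a r) = ENNReal.ofReal r := by
  rw [AddCircle.add_projection_respects_measure 1 a (measurableSet_arc a r),
    preimage_arc_inter_Ioc hr, Real.volume_Ioc, add_sub_cancel_left]

lemma disjoint_arc_arc {a r r' : ℝ} (h : r + r' ≤ 1) : Disjoint (arc a r) (arc (a + r) r') := by
  refine Set.disjoint_left.mpr fun y (hu : _ ≤ a + r) (hv : _ ≤ a + r + r') => ?_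
  set u := AddCircle.equivIoc 1 a y
  set v := AddCircle.equivIoc 1 (a + r) y
  have hv' : (v : ℝ) ∈ Set.Ioc a (a + 1) := ⟨by linarith [u.2.1, v.2.1], by linarith⟩
  -- `v` is also the representative of `y` in `(a, a + 1]`, but `u ≤ a + r < v`.
  have huv : u = ⟨v, hv'⟩ := by rw [← AddCircle.equivIoc_coe_eq hv', AddCircle.coe_equivIoc]
  have := congrArg Subtype.val huv
  linarith [v.2.1]

variable (q : ℕ → ℝ)

-- Node `k` transmits on the arc `(q 2 + ⋯ + q k, q 2 + ⋯ + q (k + 1)]`, so link `k + 1` is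
-- active exactly there and consecutive nodes transmit on adjacent arcs.
def nodeArc (k : ℕ) : Set UnitAddCircle := arc (∑ m ∈ Ioc 1 k, q m) (q (k + 1))

noncomputable def arcState (N : ℕ) (y : UnitAddCircle) : Fin N → Bool :=
  fun j => decide (y ∈ nodeArc q (j + 1))

noncomputable def arcSchedule (N : ℕ) (s : Fin N → Bool) : ℝ := volume.real (arcState q N ⁻¹' {s})

variable {q} {N : ℕ}

lemma disjoint_nodeArc_succ {k : ℕ} (hk : 1 ≤ k) (h : q (k + 1) + q (k + 2) ≤ 1) :
    Disjoint (nodeArc q k) (nodeArc q (k + 1)) := by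
  rw [nodeArc, nodeArc, sum_Ioc_succ_top hk]
  exact disjoint_arc_arc h

lemma measurableSet_nodeArc (k : ℕ) : MeasurableSet (nodeArc q k) := measurableSet_arc _ _

lemma measureReal_nodeArc {k : ℕ} (h0 : 0 ≤ q (k + 1)) (h1 : q (k + 1) ≤ 1) :
    volume.real (nodeArc q k) = q (k + 1) := by
  rw [measureReal_def, nodeArc, volume_arc h1, ENNReal.toReal_ofReal h0]

lemma measurable_arcState : Measurable (arcState q N) :=
  measurable_pi_iff.mpr fun j => measurable_to_bool (by
    convert measurableSet_nodeArc (q := q) (j + 1)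
    ext
    simp [arcState])

lemma sum_arcSchedule (F : Finset (Fin N → Bool)) :
    ∑ s ∈ F, arcSchedule q N s = volume.real (arcState q N ⁻¹' F) :=
  sum_measureReal_preimage_singleton F fun s _ => measurable_arcState (measurableSet_singleton s)

lemma isSchedule_arcSchedule : IsSchedule N (arcSchedule q N) := by
  refine ⟨fun s => measureReal_nonneg, ?_⟩
  rw [sum_arcSchedule, coe_univ, Set.preimage_univ, measureReal_def, UnitAddCircle.measure_univ]
  rfl

lemma activeTime_arcSchedule (i : ℕ) :
    activeTime N (arcSchedule q N) i = volume.real {y | linkActive N (arcState q N y) i} := by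
  rw [activeTime, sum_arcSchedule]
  congr 1
  ext y
  simp

lemma nodeState_arcState {k : ℕ} (h1 : 1 ≤ k) (h2 : k ≤ N) (y : UnitAddCircle) :
    nodeState N (arcState q N y) k = true ↔ y ∈ nodeArc q k := by
  rw [nodeState, if_neg (by omega), dif_pos (by omega), arcState, Nat.sub_add_cancel h1]
  exact decide_eq_true_iff

lemma linkActive_one_arcState (hN : 1 ≤ N) (y : UnitAddCircle) :
    linkActive N (arcState q N y) 1 ↔ y ∉ nodeArc q 1 := by
  rw [linkActive, Bool.eq_false_iff, ne_eq, nodeState_arcState le_rfl hN]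
  simp [nodeState]

lemma linkActive_succ_arcState (hadj : ∀ i ∈ Icc 1 N, q i + q (i + 1) ≤ 1) {k : ℕ} (h1 : 1 ≤ k)
    (h2 : k ≤ N) (y : UnitAddCircle) :
    linkActive N (arcState q N y) (k + 1) ↔ y ∈ nodeArc q k := by
  rw [linkActive, Nat.add_sub_cancel, nodeState_arcState h1 h2, and_iff_left_iff_imp]
  intro hy
  rcases h2.lt_or_eq with hlt | rfl
  · rw [Bool.eq_false_iff, ne_eq, nodeState_arcState (by omega) hlt]
    exact Set.disjoint_left.mp (disjoint_nodeArc_succ h1 (hadj (k + 1) (by simp; omega))) hy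
  · simp [nodeState]

theorem exists_isSchedule_le_activeTime (hN : 1 ≤ N) (hq : ∀ i ∈ Icc 1 (N + 1), 0 ≤ q i)
    (hadj : ∀ i ∈ Icc 1 N, q i + q (i + 1) ≤ 1) :
    ∃ lam, IsSchedule N lam ∧ ∀ i ∈ Icc 1 (N + 1), q i ≤ activeTime N lam i := by
  refine ⟨arcSchedule q N, isSchedule_arcSchedule, fun i hi => ?_⟩
  obtain ⟨hi1, hi2⟩ := mem_Icc.mp hi
  have hle_one : ∀ k ∈ Icc 1 N, q (k + 1) ≤ 1 := fun k hk => by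
    linarith [hadj k hk, hq k (Icc_subset_Icc_right (by omega) hk)]
  rw [activeTime_arcSchedule]
  rcases hi1.eq_or_lt with rfl | hlt
  · have hset : {y | linkActive N (arcState q N y) 1} = (nodeArc q 1)ᶜ :=
      Set.ext fun y => linkActive_one_arcState hN y
    rw [hset, measureReal_compl (measurableSet_nodeArc 1), measureReal_def,
      UnitAddCircle.measure_univ, measureReal_nodeArc (hq 2 (by simp; omega))
      (hle_one 1 (by simp; omega)), ENNReal.toReal_one]
    linarith [hadj 1 (by simp; omega)]
  · obtain ⟨k, rfl⟩ : ∃ k, i = k + 1 := ⟨i - 1, by omega⟩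
    have hk : k ∈ Icc 1 N := mem_Icc.mpr ⟨by omega, by omega⟩
    have hset : {y | linkActive N (arcState q N y) (k + 1)} = nodeArc q k :=
      Set.ext fun y => linkActive_succ_arcState hadj (by omega) (by omega) y
    rw [hset, measureReal_nodeArc (hq (k + 1) (by simp; omega)) (hle_one k hk)]

end ArcSchedule

/-- The approximate capacity of the `N`-relay Gaussian half-duplex line network, i.e.
the supremum over schedules of the minimum cut value, is attained and equals
`min_{i ∈ [1,N]} ℓ_i ℓ_{i+1} / (ℓ_i + ℓ_{i+1})`. -/
theorem approx_capacity_closed_form (N : ℕ) (hN : 1 ≤ N) (ℓ : ℕ → ℝ)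
    (hℓ : ∀ i ∈ Finset.Icc 1 (N + 1), 0 < ℓ i) :
    IsGreatest
      {x : ℝ | ∃ lam : (Fin N → Bool) → ℝ,
        (∀ s, 0 ≤ lam s) ∧ (∑ s, lam s) = 1 ∧ x = minCut N ℓ lam}
      ((Finset.Icc 1 N).inf' (Finset.nonempty_Icc.mpr hN)
        (fun i => ℓ i * ℓ (i + 1) / (ℓ i + ℓ (i + 1)))) := by
  set C := (Icc 1 N).inf' (nonempty_Icc.mpr hN) fun i => ℓ i * ℓ (i + 1) / (ℓ i + ℓ (i + 1))
  have hℓ_adj : ∀ i ∈ Icc 1 N, 0 < ℓ i ∧ 0 < ℓ (i + 1) := fun i hi => by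
    obtain ⟨h1, h2⟩ := mem_Icc.mp hi
    exact ⟨hℓ i (mem_Icc.mpr ⟨h1, by omega⟩), hℓ (i + 1) (mem_Icc.mpr ⟨by omega, by omega⟩)⟩
  have hC : 0 ≤ C := le_inf' _ _ fun i hi => by obtain ⟨h1, h2⟩ := hℓ_adj i hi; positivity
  have upper : ∀ lam, IsSchedule N lam → minCut N ℓ lam ≤ C := fun lam hlam =>
    le_inf' _ _ fun i hi => by
      obtain ⟨h1, h2⟩ := mem_Icc.mp hi
      exact le_mul_div_add_of_le_mul (hℓ_adj i hi).1 (hℓ_adj i hi).2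
        (minCut_le_mul_activeTime ℓ lam h1 (by omega))
        (minCut_le_mul_activeTime ℓ lam (by omega) (by omega))
        (activeTime_add_activeTime_succ_le_one hlam i)
  refine ⟨?_, fun x ⟨lam, h0, h1, hx⟩ => hx ▸ upper lam ⟨h0, h1⟩⟩
  -- Link `i` active for a fraction `C / ℓ i` of the time carries exactly `C`.
  obtain ⟨lam, hlam, hact⟩ := exists_isSchedule_le_activeTime (q := fun i => C / ℓ i) hN
    (fun i hi => div_nonneg hC (hℓ i hi).le) fun i hi =>
      (div_add_div_le_one_iff_le_mul_div_add (hℓ_adj i hi).1 (hℓ_adj i hi).2).mpr (inf'_le _ hi)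
  refine ⟨lam, hlam.1, hlam.2, le_antisymm ?_ (upper lam hlam)⟩
  refine le_minCut (fun i hi => (hℓ i hi).le) hlam.1 fun i hi => ?_
  calc C = ℓ i * (C / ℓ i) := (mul_div_cancel₀ C (hℓ i hi).ne').symm
    _ ≤ ℓ i * activeTime N lam i := mul_le_mul_of_nonneg_left (hact i hi) (hℓ i hi).le
end

section
/- For every integer N ≥ 1 and all positive real link capacities ℓ_1, …, ℓ_{N+1}, there exists a simple schedule λ, i.e., one whose support {s : λ_s ≠ 0} has at most N+1 elements, such that C^λ = min_{i∈{1,…,N}} ℓ_i·ℓ_{i+1}/(ℓ_i + ℓ_{i+1}). -/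
/-!
Let `C` be the claimed rate and `t i = C / ℓ i`, the fraction of time link `i` must be active;
the choice of `C` gives `t i + t (i + 1) ≤ 1`. Wind the time interval `[0, 1)` around the circle
`ℝ / ℤ` and let relay `i` receive on the arc of length `t i` starting at `t 1 + ⋯ + t (i - 1)`,
transmitting otherwise. Consecutive arcs are adjacent and, as `t i + t (i + 1) ≤ 1`, relay `i - 1`
transmits throughout the arc of relay `i`; so link `i ≤ N` is active exactly on the `i`-th arc, for
time `t i`, and link `N + 1` for time `1 - t N ≥ t (N + 1)`. Every link thus carries at least `C`,
and link `1` exactly `C`. The state only changes at the `N + 1` arc endpoints, so at most `N + 1`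
states occur.
-/

open Finset

noncomputable def linkTime (N : ℕ) (lam : (Fin N → Bool) → ℝ) (i : ℕ) : ℝ :=
  ∑ s ∈ Finset.univ.filter (fun s : Fin N → Bool => linkActive N s i), lam s

noncomputable def rate (N : ℕ) (ℓ : ℕ → ℝ) (lam : (Fin N → Bool) → ℝ) : ℝ :=
  (Finset.Icc 1 (N + 1)).inf' ⟨1, by simp⟩ (fun i => linkTime N lam i * ℓ i)

open MeasureTheory

namespace Int

variable {R : Type*} [CommRing R] [LinearOrder R] [IsStrictOrderedRing R] [FloorRing R]

lemma fract_sub_eq_ite {a b : R} (ha : a ∈ Set.Ico (0 : R) 1) (hb : b ∈ Set.Ico (0 : R) 1) :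
    fract (a - b) = if b ≤ a then a - b else a - b + 1 := by
  obtain ⟨ha0, ha1⟩ := ha
  obtain ⟨hb0, hb1⟩ := hb
  split_ifs with h
  · exact fract_eq_self.mpr ⟨by linarith, by linarith⟩
  · rw [← fract_add_one, fract_eq_self]
    constructor <;> linarith

lemma fract_add_eq_ite {a b : R} (ha : a ∈ Set.Ico (0 : R) 1) (hb : b ∈ Set.Ico (0 : R) 1) :
    fract (a + b) = if a + b < 1 then a + b else a + b - 1 := by
  obtain ⟨ha0, ha1⟩ := ha
  obtain ⟨hb0, hb1⟩ := hb
  split_ifs with h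
  · exact fract_eq_self.mpr ⟨by linarith, h⟩
  · rw [← fract_sub_one, fract_eq_self]
    constructor <;> linarith

lemma fract_sub_fract (a c : R) : fract (a - fract c) = fract (a - c) :=
  fract_eq_fract.mpr ⟨⌊c⌋, by rw [← self_sub_floor]; ring⟩

lemma fract_fract_add (c τ : R) : fract (fract c + τ) = fract (c + τ) :=
  fract_eq_fract.mpr ⟨-⌊c⌋, by push_cast; rw [← fract_sub_self]; ring⟩

lemma le_fract_sub_of_fract_sub_add_lt {θ a u v : R} (huv : u + v ≤ 1)
    (h : fract (θ - (a + u)) < v) : u ≤ fract (θ - a) := by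
  have hv := (fract_nonneg (θ - (a + u))).trans_lt h
  have hy := fract_nonneg (θ - a)
  by_contra! hyu
  have hwrap : fract (θ - (a + u)) = fract (θ - a) - u + 1 :=
    fract_eq_iff.mpr ⟨by linarith, by linarith,
      ⌊θ - a⌋ - 1, by push_cast; rw [← self_sub_floor]; ring⟩
  linarith

/-- `θ ↦ fract (θ - c) < τ` is the indicator of an arc of `R / ℤ` from `fract c` to
`fract (c + τ)`, so on `[0, 1)` it can only change value at these two points. -/
lemma fract_sub_lt_iff_of_notMem_Ioc {ρ θ c τ : R} (hρ : 0 ≤ ρ) (hρθ : ρ ≤ θ) (hθ : θ < 1)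
    (hτ : τ ∈ Set.Icc (0 : R) 1) (hc : fract c ∉ Set.Ioc ρ θ) (hcτ : fract (c + τ) ∉ Set.Ioc ρ θ) :
    fract (θ - c) < τ ↔ fract (ρ - c) < τ := by
  obtain hτ1 | rfl := hτ.2.lt_or_eq
  · have hc' : fract c ∈ Set.Ico (0 : R) 1 := ⟨fract_nonneg c, fract_lt_one c⟩
    rw [← fract_fract_add, fract_add_eq_ite hc' ⟨hτ.1, hτ1⟩] at hcτ
    rw [← fract_sub_fract θ, ← fract_sub_fract ρ, fract_sub_eq_ite ⟨by linarith, hθ⟩ hc',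
      fract_sub_eq_ite ⟨hρ, by linarith⟩ hc']
    simp only [Set.mem_Ioc, not_and, not_le] at hc hcτ
    split_ifs at * <;> grind
  · simp only [fract_lt_one]

end Int

open Int (fract)

instance : IsProbabilityMeasure (volume.restrict (Set.Ico (0 : ℝ) 1)) :=
  ⟨by simp⟩

lemma measurableSet_fract_sub_lt (c t : ℝ) : MeasurableSet {θ : ℝ | fract (θ - c) < t} :=
  measurableSet_lt (measurable_fract.comp (measurable_sub_const c)) measurable_const

lemma measureReal_fract_sub_lt (c : ℝ) {t : ℝ} (ht : t ∈ Set.Icc 0 1) :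
    (volume.restrict (Set.Ico 0 1)).real {θ | fract (θ - c) < t} = t := by
  set A := {θ : ℝ | fract (θ - c) < t}
  have hA : MeasurableSet A := measurableSet_fract_sub_lt c t
  have hperiodic : ∀ g : AddSubgroup.zmultiples (1 : ℝ), (fun x => g +ᵥ x) ⁻¹' A = A := by
    rintro ⟨_, n, rfl⟩
    ext θ
    simp [A, AddSubgroup.vadd_def, add_sub_assoc]
  have hIco_Ioc (a : ℝ) : volume (A ∩ Set.Ico a (a + 1)) = volume (A ∩ Set.Ioc a (a + 1)) :=
    measure_congr (ae_eq_refl A |>.inter Ico_ae_eq_Ioc)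
  have hwindow : A ∩ Set.Ico c (c + 1) = Set.Ico c (c + t) := by
    ext θ
    simp only [A, Set.mem_inter_iff, Set.mem_ofPred_eq, Set.mem_Ico]
    constructor
    · rintro ⟨h, h0, h1⟩
      rw [Int.fract_eq_self.mpr ⟨by linarith, by linarith⟩] at h
      exact ⟨h0, by linarith⟩
    · rintro ⟨h0, h1⟩
      rw [Int.fract_eq_self.mpr ⟨by linarith, by linarith [ht.2]⟩]
      exact ⟨by linarith, h0, by linarith [ht.2]⟩
  have hshift : volume (A ∩ Set.Ico 0 1) = volume (A ∩ Set.Ico c (c + 1)) := by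
    rw [hIco_Ioc c, ← (isAddFundamentalDomain_Ioc one_pos 0 volume).measure_set_eq
      (isAddFundamentalDomain_Ioc one_pos c volume) hA hperiodic, ← hIco_Ioc 0, zero_add]
  rw [measureReal_restrict_apply hA, measureReal_def, hshift, hwindow, Real.volume_Ico,
    add_sub_cancel_left, ENNReal.toReal_ofReal ht.1]

lemma image_subset_image_of_eq_on_gaps {ι α : Type*} [LinearOrder ι] {B : Finset ι} {S : Set ι}
    {f : ι → α} (hS : ∀ θ ∈ S, ∃ b ∈ B, b ≤ θ)
    (hf : ∀ ρ ∈ B, ∀ θ ∈ S, ρ ≤ θ → (∀ b ∈ B, b ∉ Set.Ioc ρ θ) → f θ = f ρ) :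
    f '' S ⊆ f '' B := by
  rintro _ ⟨θ, hθ, rfl⟩
  have hne : (B.filter (· ≤ θ)).Nonempty := by
    obtain ⟨b, hb, hbθ⟩ := hS θ hθ
    exact ⟨b, Finset.mem_filter.mpr ⟨hb, hbθ⟩⟩
  obtain ⟨hρB, hρθ⟩ := Finset.mem_filter.mp ((B.filter (· ≤ θ)).max'_mem hne)
  refine ⟨_, hρB, (hf _ hρB θ hθ hρθ fun b hb hbI => ?_).symm⟩
  exact not_le.mpr hbI.1 ((B.filter (· ≤ θ)).le_max' b (Finset.mem_filter.mpr ⟨hb, hbI.2⟩))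

lemma nodeState_zero (N : ℕ) (s : Fin N → Bool) : nodeState N s 0 = true := rfl

lemma nodeState_succ {N : ℕ} (s : Fin N → Bool) (k : Fin N) : nodeState N s (k + 1) = s k := by
  simp [nodeState]

lemma nodeState_add_one_self (N : ℕ) (s : Fin N → Bool) : nodeState N s (N + 1) = false := by
  simp [nodeState]

lemma linkActive_succ_iff (N : ℕ) (s : Fin N → Bool) (m : ℕ) :
    linkActive N s (m + 1) ↔ nodeState N s m = true ∧ nodeState N s (m + 1) = false := by
  simp [linkActive]

section OccupationSchedule

variable {N : ℕ} {Ω : Type*} [MeasurableSpace Ω]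

noncomputable def occupationSchedule (μ : Measure Ω) (σ : Ω → Fin N → Bool) :
    (Fin N → Bool) → ℝ :=
  fun s => μ.real (σ ⁻¹' {s})

variable (μ : Measure Ω) [IsFiniteMeasure μ] {σ : Ω → Fin N → Bool}

lemma sum_filter_occupationSchedule (hσ : Measurable σ) (P : (Fin N → Bool) → Prop)
    [DecidablePred P] :
    ∑ s ∈ Finset.univ.filter P, occupationSchedule μ σ s = μ.real {ω | P (σ ω)} := by
  simp only [occupationSchedule]
  rw [sum_measureReal_preimage_singleton _ fun s _ => hσ (measurableSet_singleton s)]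
  simp

lemma linkTime_occupationSchedule (hσ : Measurable σ) (i : ℕ) :
    linkTime N (occupationSchedule μ σ) i = μ.real {ω | linkActive N (σ ω) i} :=
  sum_filter_occupationSchedule μ hσ _

lemma sum_occupationSchedule [IsProbabilityMeasure μ] (hσ : Measurable σ) :
    ∑ s, occupationSchedule μ σ s = 1 := by
  simpa using sum_filter_occupationSchedule μ hσ (fun _ => True)

lemma support_occupationSchedule_restrict_subset (ν : Measure Ω) (S : Set Ω)
    (hσ : Measurable σ) :
    {s | occupationSchedule (ν.restrict S) σ s ≠ 0} ⊆ σ '' S := by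
  intro s hs
  have hne : ν (σ ⁻¹' {s} ∩ S) ≠ 0 := fun h0 =>
    hs (by simp [occupationSchedule, Measure.real, Measure.restrict_apply
      (hσ (measurableSet_singleton s)), h0])
  obtain ⟨ω, hωs, hωS⟩ := nonempty_of_measure_ne_zero hne
  exact ⟨ω, hωS, hωs⟩

end OccupationSchedule

section CircularSchedule

variable (N : ℕ) (t : ℕ → ℝ)

def windowStart (k : ℕ) : ℝ := ∑ i ∈ range k, t (i + 1)

/-- Relay `k` receives exactly while `θ` lies on the arc of `ℝ / ℤ` of length `t (k + 1)` that
starts at `t 1 + ⋯ + t k`, so the receiving arcs of consecutive relays are adjacent. -/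
noncomputable def circularState (θ : ℝ) : Fin N → Bool :=
  fun k => decide (t (k + 1) ≤ fract (θ - windowStart t k))

noncomputable def circularSchedule : (Fin N → Bool) → ℝ :=
  occupationSchedule (volume.restrict (Set.Ico 0 1)) (circularState N t)

lemma windowStart_zero : windowStart t 0 = 0 := sum_range_zero _

lemma windowStart_succ (k : ℕ) : windowStart t (k + 1) = windowStart t k + t (k + 1) :=
  sum_range_succ _ _

lemma measurable_circularState : Measurable (circularState N t) :=
  measurable_pi_lambda _ fun k => measurable_to_bool <| by
    convert (measurableSet_fract_sub_lt (windowStart t k) (t (k + 1))).compl using 1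
    ext θ
    simp [circularState]

variable {N t}

lemma circularState_eq_false_iff (θ : ℝ) (k : Fin N) :
    circularState N t θ k = false ↔ fract (θ - windowStart t k) < t (k + 1) := by
  simp [circularState]

lemma linkActive_circularState_iff (θ : ℝ) {i : ℕ} (hi : i ∈ Icc 1 N)
    (hpair : ∀ j ∈ Ico 1 N, t j + t (j + 1) ≤ 1) :
    linkActive N (circularState N t θ) i ↔ fract (θ - windowStart t (i - 1)) < t i := by
  obtain ⟨m, rfl⟩ : ∃ m, i = m + 1 := ⟨i - 1, by grind⟩
  have hm : m < N := by grind
  rw [linkActive_succ_iff, nodeState_succ _ ⟨m, hm⟩, circularState_eq_false_iff,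
    Nat.add_sub_cancel, and_iff_right_iff_imp]
  intro hrecv
  cases m with
  | zero => exact nodeState_zero N _
  | succ k =>
    rw [nodeState_succ _ ⟨k, by omega⟩, circularState, decide_eq_true_iff]
    rw [windowStart_succ] at hrecv
    exact Int.le_fract_sub_of_fract_sub_add_lt (hpair (k + 1) (by grind)) hrecv

lemma linkActive_circularState_add_one_self_iff (θ : ℝ) (hN : 1 ≤ N) :
    linkActive N (circularState N t θ) (N + 1) ↔ ¬ fract (θ - windowStart t (N - 1)) < t N := by
  obtain ⟨n, rfl⟩ : ∃ n, N = n + 1 := ⟨N - 1, by omega⟩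
  rw [linkActive_succ_iff, nodeState_succ _ ⟨n, by omega⟩, nodeState_add_one_self]
  simp [circularState]

lemma linkTime_circularSchedule_of_mem {i : ℕ} (hi : i ∈ Icc 1 N) (ht : t i ∈ Set.Icc 0 1)
    (hpair : ∀ j ∈ Ico 1 N, t j + t (j + 1) ≤ 1) :
    linkTime N (circularSchedule N t) i = t i := by
  rw [circularSchedule, linkTime_occupationSchedule _ (measurable_circularState N t)]
  simp_rw [linkActive_circularState_iff _ hi hpair]
  exact measureReal_fract_sub_lt _ ht

lemma linkTime_circularSchedule_add_one_self (hN : 1 ≤ N) (ht : t N ∈ Set.Icc 0 1) :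
    linkTime N (circularSchedule N t) (N + 1) = 1 - t N := by
  rw [circularSchedule, linkTime_occupationSchedule _ (measurable_circularState N t)]
  simp_rw [linkActive_circularState_add_one_self_iff _ hN]
  rw [← Set.compl_ofPred, probReal_compl_eq_one_sub (measurableSet_fract_sub_lt _ _),
    measureReal_fract_sub_lt _ ht]

lemma le_linkTime_circularSchedule (hN : 1 ≤ N) (ht : ∀ i ∈ Icc 1 N, t i ∈ Set.Icc 0 1)
    (hpair : ∀ i ∈ Icc 1 N, t i + t (i + 1) ≤ 1) {i : ℕ} (hi : i ∈ Icc 1 (N + 1)) :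
    t i ≤ linkTime N (circularSchedule N t) i := by
  have hpair' : ∀ j ∈ Ico 1 N, t j + t (j + 1) ≤ 1 := fun j hj => hpair j (by grind)
  obtain hiN | rfl : i ≤ N ∨ i = N + 1 := by grind
  · rw [linkTime_circularSchedule_of_mem (by grind) (ht i (by grind)) hpair']
  · rw [linkTime_circularSchedule_add_one_self hN (ht N (by grind))]
    linarith [hpair N (by grind)]

lemma circularState_eq_of_notMem_Ioc (ht : ∀ i ∈ Icc 1 N, t i ∈ Set.Icc 0 1) {ρ θ : ℝ}
    (hρ : 0 ≤ ρ) (hρθ : ρ ≤ θ) (hθ : θ < 1)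
    (hgap : ∀ k ≤ N, fract (windowStart t k) ∉ Set.Ioc ρ θ) :
    circularState N t θ = circularState N t ρ := by
  funext k
  have hiff := Int.fract_sub_lt_iff_of_notMem_Ioc hρ hρθ hθ (ht (k + 1) (by grind))
    (hgap k (by omega)) (by rw [← windowStart_succ]; exact hgap (k + 1) (by omega))
  simp only [circularState, ← not_lt, hiff]

lemma ncard_support_circularSchedule_le (ht : ∀ i ∈ Icc 1 N, t i ∈ Set.Icc 0 1) :
    {s | circularSchedule N t s ≠ 0}.ncard ≤ N + 1 := by
  set B := (range (N + 1)).image fun k => fract (windowStart t k)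
  have hB : ∀ b ∈ B, 0 ≤ b := by
    simp only [B, mem_image]
    rintro _ ⟨k, -, rfl⟩
    exact Int.fract_nonneg _
  have hsupp : {s | circularSchedule N t s ≠ 0} ⊆ circularState N t '' B := by
    refine (support_occupationSchedule_restrict_subset _ _ (measurable_circularState N t)).trans
      (image_subset_image_of_eq_on_gaps (fun θ hθ => ⟨0, ?_, hθ.1⟩) ?_)
    · exact mem_image.mpr ⟨0, by simp, by rw [windowStart_zero, Int.fract_zero]⟩
    · intro ρ hρ θ hθ hρθ hgap
      exact circularState_eq_of_notMem_Ioc ht (hB ρ hρ) hρθ hθ.2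
        fun k hk => hgap _ (mem_image.mpr ⟨k, by grind, rfl⟩)
  calc {s | circularSchedule N t s ≠ 0}.ncard
      ≤ (circularState N t '' B).ncard := Set.ncard_le_ncard hsupp (B.finite_toSet.image _)
    _ ≤ B.card := (Set.ncard_image_le B.finite_toSet).trans (Set.ncard_coe_finset B).le
    _ ≤ N + 1 := card_image_le.trans (card_range _).le

end CircularSchedule

lemma div_add_div_le_one_of_le {a b C : ℝ} (ha : 0 < a) (hb : 0 < b) (hC : C ≤ a * b / (a + b)) :
    C / a + C / b ≤ 1 := by
  rw [le_div_iff₀ (by positivity)] at hC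
  rw [div_add_div _ _ ha.ne' hb.ne', div_le_one (by positivity)]
  linarith

lemma rate_eq_of_le_of_eq {N : ℕ} {ℓ : ℕ → ℝ} {lam : (Fin N → Bool) → ℝ} {C : ℝ} {i : ℕ}
    (hi : i ∈ Icc 1 (N + 1)) (heq : linkTime N lam i * ℓ i = C)
    (hle : ∀ j ∈ Icc 1 (N + 1), C ≤ linkTime N lam j * ℓ j) : rate N ℓ lam = C :=
  le_antisymm (inf'_le_of_le _ hi heq.le) (le_inf' _ _ hle)

/-- There exists a simple schedule (support of size at most `N+1`) achieving
`min_{i ∈ [1,N]} ℓ_i ℓ_{i+1} / (ℓ_i + ℓ_{i+1})`. -/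
theorem exists_simple_schedule (N : ℕ) (hN : 1 ≤ N) (ℓ : ℕ → ℝ)
    (hℓ : ∀ i ∈ Finset.Icc 1 (N + 1), 0 < ℓ i) :
    ∃ lam : (Fin N → Bool) → ℝ,
      (∀ s, 0 ≤ lam s) ∧ (∑ s, lam s) = 1 ∧
      {s : Fin N → Bool | lam s ≠ 0}.ncard ≤ N + 1 ∧
      rate N ℓ lam =
        (Finset.Icc 1 N).inf' (Finset.nonempty_Icc.mpr hN)
          (fun i => ℓ i * ℓ (i + 1) / (ℓ i + ℓ (i + 1))) := by
  set C := (Finset.Icc 1 N).inf' (Finset.nonempty_Icc.mpr hN)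
    (fun i => ℓ i * ℓ (i + 1) / (ℓ i + ℓ (i + 1)))
  have hℓpair (i : ℕ) (hi : i ∈ Icc 1 N) : 0 < ℓ i ∧ 0 < ℓ (i + 1) :=
    ⟨hℓ i (by grind), hℓ (i + 1) (by grind)⟩
  have hC : 0 < C := (lt_inf'_iff _).2 fun i hi => by
    obtain ⟨h1, h2⟩ := hℓpair i hi
    positivity
  set t : ℕ → ℝ := fun i => C / ℓ i
  have hpair (i : ℕ) (hi : i ∈ Icc 1 N) : t i + t (i + 1) ≤ 1 :=
    div_add_div_le_one_of_le (hℓpair i hi).1 (hℓpair i hi).2 (inf'_le _ hi)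
  have ht (i : ℕ) (hi : i ∈ Icc 1 N) : t i ∈ Set.Icc 0 1 := by
    have : 0 < t (i + 1) := div_pos hC (hℓpair i hi).2
    exact ⟨div_nonneg hC.le (hℓpair i hi).1.le, by linarith [hpair i hi]⟩
  have hmul (i : ℕ) (hi : i ∈ Icc 1 (N + 1)) : t i * ℓ i = C := div_mul_cancel₀ C (hℓ i hi).ne'
  refine ⟨circularSchedule N t, fun _ => measureReal_nonneg,
    sum_occupationSchedule _ (measurable_circularState N t),
    ncard_support_circularSchedule_le ht, rate_eq_of_le_of_eq (i := 1) (by grind) ?_ ?_⟩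
  · rw [linkTime_circularSchedule_of_mem (by grind) (ht 1 (by grind))
      fun j hj => hpair j (by grind), hmul 1 (by grind)]
  · intro j hj
    rw [← hmul j hj]
    exact mul_le_mul_of_nonneg_right (le_linkTime_circularSchedule hN ht hpair hj) (hℓ j hj).le
end

section
/- For every integer N ≥ 1, all positive real link capacities ℓ_1, …, ℓ_{N+1}, and every schedule λ, the minimum over all cuts A ⊆ {1,…,N} of the cut value v_λ(A) equals min_{i∈{1,…,N+1}} (Σ_{s∈S_i} λ_s) · ℓ_i; that is, the minimization over all 2^N cuts can be restricted to the N+1 fundamental cuts, each of whose crossing set consists of a single link. -/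
/-!
Every summand of a cut value is nonnegative, and every cut `A` crosses at least one link: the
first link entering `A ∪ {N+1}`, i.e. the link into the least element of that set. So
`v_λ(A)` dominates the term of one fundamental cut. Conversely the cut `{i, …, N}` crosses only
link `i`, so each fundamental term is itself a cut value.
-/

open Finset

lemma cutValue_eq_sum_linkTime (N : ℕ) (ℓ : ℕ → ℝ) (lam : (Fin N → Bool) → ℝ)
    (A : Finset ℕ) :
    cutValue N ℓ lam A = ∑ i ∈ crossing N A, linkTime N lam i * ℓ i := by
  unfold cutValue linkTime
  simp_rw [mul_sum, sum_filter, sum_mul, ite_mul, zero_mul]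
  exact sum_comm

lemma crossing_subset_Icc (N : ℕ) (A : Finset ℕ) : crossing N A ⊆ Icc 1 (N + 1) :=
  filter_subset _ _

lemma crossing_Icc_eq_singleton {N i : ℕ} (hi : i ∈ Icc 1 (N + 1)) :
    crossing N (Icc i N) = {i} := by
  rw [mem_Icc] at hi
  ext j
  simp only [crossing, mem_filter, mem_Icc, mem_singleton]
  omega

lemma min'_insert_mem_crossing {N : ℕ} {A : Finset ℕ} (hA : A ⊆ Icc 1 N) :
    (insert (N + 1) A).min' (insert_nonempty _ _) ∈ crossing N A := by
  set i := (insert (N + 1) A).min' (insert_nonempty _ _)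
  have hi_mem : i ∈ insert (N + 1) A := min'_mem _ _
  have hi_le : i ≤ N + 1 := min'_le _ _ (mem_insert_self _ _)
  have hi_pos : 1 ≤ i := by
    rcases mem_insert.mp hi_mem with h | h
    · omega
    · exact (mem_Icc.mp (hA h)).1
  have hprev : i - 1 ∉ A := fun h => by
    have : i ≤ i - 1 := min'_le _ _ (mem_insert_of_mem h)
    omega
  simp only [crossing, mem_filter, mem_Icc]
  refine ⟨⟨hi_pos, hi_le⟩, (mem_insert.mp hi_mem).symm, ?_⟩
  rcases Nat.eq_zero_or_pos (i - 1) with h | h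
  · exact Or.inl h
  · exact Or.inr ⟨⟨h, by omega⟩, hprev⟩

lemma linkTime_nonneg {N : ℕ} {lam : (Fin N → Bool) → ℝ} (hlam : ∀ s, 0 ≤ lam s) (i : ℕ) :
    0 ≤ linkTime N lam i :=
  sum_nonneg fun s _ => hlam s

lemma rate_le_cutValue {N : ℕ} {ℓ : ℕ → ℝ} (hℓ : ∀ i ∈ Icc 1 (N + 1), 0 ≤ ℓ i)
    {lam : (Fin N → Bool) → ℝ} (hlam : ∀ s, 0 ≤ lam s) {A : Finset ℕ} (hA : A ⊆ Icc 1 N) :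
    rate N ℓ lam ≤ cutValue N ℓ lam A := by
  have hi := min'_insert_mem_crossing hA
  rw [cutValue_eq_sum_linkTime]
  calc rate N ℓ lam ≤ _ := inf'_le _ (crossing_subset_Icc N A hi)
    _ ≤ _ := single_le_sum (fun j hj =>
        mul_nonneg (linkTime_nonneg hlam j) (hℓ j (crossing_subset_Icc N A hj))) hi

lemma cutValue_Icc (N : ℕ) (ℓ : ℕ → ℝ) (lam : (Fin N → Bool) → ℝ) {i : ℕ}
    (hi : i ∈ Icc 1 (N + 1)) :
    cutValue N ℓ lam (Icc i N) = linkTime N lam i * ℓ i := by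
  rw [cutValue_eq_sum_linkTime, crossing_Icc_eq_singleton hi, sum_singleton]

/-- The minimum over all `2^N` cuts of the cut value equals the minimum over the `N+1`
fundamental cuts, i.e. `min_{i ∈ [1,N+1]} (Σ_{s ∈ S_i} λ_s) ℓ_i`. -/
theorem minCut_eq_fundamental (N : ℕ) (ℓ : ℕ → ℝ)
    (hℓ : ∀ i ∈ Finset.Icc 1 (N + 1), 0 < ℓ i)
    (lam : (Fin N → Bool) → ℝ) (hlam : ∀ s, 0 ≤ lam s) :
    ((Finset.Icc 1 N).powerset).inf' ⟨∅, by simp⟩ (cutValue N ℓ lam) =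
      rate N ℓ lam := by
  apply le_antisymm
  · refine le_inf' _ _ fun i hi => ?_
    have hcut : Icc i N ∈ (Icc 1 N).powerset :=
      mem_powerset.mpr (Icc_subset_Icc_left (mem_Icc.mp hi).1)
    exact (inf'_le _ hcut).trans_eq (cutValue_Icc N ℓ lam hi)
  · exact le_inf' _ _ fun A hA =>
      rate_le_cutValue (fun i hi => (hℓ i hi).le) hlam (mem_powerset.mp hA)
end

section
/- Let N ≥ 1 be an integer and let ℓ_1, …, ℓ_{N+1} be positive integers. Let M be a common multiple of ℓ_1, …, ℓ_{N+1}, set n_i = M/ℓ_i for i ∈ {1,…,N+1}, and set Δ = max_{i∈{1,…,N}} (n_i + n_{i+1}). Then there exists a schedule λ whose support {s : λ_s ≠ 0} has at most N+1 elements such that for every i ∈ {1,…,N+1}, Σ_{s∈S_i} λ_s = n_i/Δ. -/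
open Finset

/-!
Lay `D = Δ` equally long time slots on the circle `ZMod D` and serve link `i` during the arc of
`n i` slots starting at `n 1 + ⋯ + n (i - 1)`. As `n i + n (i + 1) ≤ D`, consecutive arcs are
disjoint, and as the maximising pair fills the whole circle, every slot lies on some arc. Let a
relay listen during its own arc and otherwise transmit iff some later link is served; then in each
slot exactly the links whose arc contains it are active, so weighting every slot by `1 / D` gives
link `i` the time `n i / D`. The state only changes at the arc endpoints `n 1 + ⋯ + n i` (mod `D`),
and for a maximising `j` the endpoints `i = j - 1` and `i = j + 1` coincide, so at most `N + 1`
states occur.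
-/

namespace ZMod

variable {D : ℕ} [NeZero D]

def arc (r : ZMod D) (m : ℕ) : Finset (ZMod D) := {x | (x - r).val < m}

lemma mem_arc {r x : ZMod D} {m : ℕ} : x ∈ arc r m ↔ (x - r).val < m := by
  simp [arc]

lemma card_arc (r : ZMod D) {m : ℕ} (hm : m ≤ D) : #(arc r m) = m := by
  rw [card_equiv (Equiv.subRight r) (t := {y : ZMod D | y.val < m}) (by simp [arc])]
  obtain ⟨k, rfl⟩ := Nat.exists_eq_add_one_of_ne_zero (NeZero.ne D)
  exact (Fin.card_filter_val_lt).trans (min_eq_right hm)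

lemma mem_arc_of_le_of_lt {r m : ℕ} {x : ZMod D} (hr : r ≤ x.val) (hx : x.val < r + m) :
    x ∈ arc (r : ZMod D) m := by
  have hx' := x.val_lt
  rw [mem_arc, ← natCast_zmod_val x, ← Nat.cast_sub hr, val_cast_of_lt (by omega)]
  omega

lemma disjoint_arc_arc (r : ZMod D) {a b : ℕ} (hab : a + b ≤ D) :
    Disjoint (arc r a) (arc (r + a) b) := by
  refine disjoint_left.mpr fun x ha hb => ?_
  rw [mem_arc] at ha hb
  have h : x - (r + a) = ((((x - r).val + (D - a) : ℕ)) : ZMod D) := by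
    rw [Nat.cast_add, natCast_zmod_val, Nat.cast_sub (by omega), natCast_self]; ring
  rw [h, val_cast_of_lt (by omega)] at hb
  omega

lemma mem_arc_iff_sub_one {r x : ZMod D} {m : ℕ} (hr : x ≠ r) (hm : x ≠ r + m) :
    x ∈ arc r m ↔ x - 1 ∈ arc r m := by
  set y := x - 1 - r
  have hy : x - r = ((y.val + 1 : ℕ) : ZMod D) := by
    rw [Nat.cast_succ, natCast_zmod_val]; ring
  have hlt : y.val + 1 < D := by
    refine lt_of_le_of_ne y.val_lt ?_
    intro h
    rw [h, natCast_self, sub_eq_zero] at hy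
    exact hr hy
  have hne : y.val + 1 ≠ m := by
    rintro rfl
    exact hm (by rw [← hy]; ring)
  rw [mem_arc, mem_arc, hy, val_cast_of_lt hlt, show x - 1 - r = y from rfl]
  omega

end ZMod

section RelayState

variable {N : ℕ} {T : Type*} [DecidableEq T]

/-- `I j` is the set of slots in which link `j` is served; the relay indexed by `k : Fin N` is
node `k + 1`. -/
def relayState (I : ℕ → Finset T) (t : T) : Fin N → Bool :=
  fun k => decide (t ∉ I (k + 1) ∧ t ∈ (Ioc ((k : ℕ) + 1) (N + 1)).biUnion I)

lemma nodeState_relayState (I : ℕ → Finset T) (t : T) {j : ℕ} (hj : j ∈ Icc 1 (N + 1)) :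
    nodeState N (relayState I t) j = decide (t ∉ I j ∧ t ∈ (Ioc j (N + 1)).biUnion I) := by
  rw [mem_Icc] at hj
  rcases hj.2.lt_or_eq with hjN | rfl
  · obtain ⟨k, rfl⟩ := Nat.exists_eq_add_one_of_ne_zero (by omega : j ≠ 0)
    simp [nodeState, relayState, show k < N by omega]
  · simp [nodeState]

lemma linkActive_relayState_iff (I : ℕ → Finset T) (t : T)
    (hcover : ∃ j ∈ Icc 1 (N + 1), t ∈ I j) (hdisj : ∀ j ∈ Icc 1 N, Disjoint (I j) (I (j + 1)))
    {i : ℕ} (hi : i ∈ Icc 1 (N + 1)) :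
    linkActive N (relayState I t) i ↔ t ∈ I i := by
  unfold linkActive
  rw [nodeState_relayState I t hi]
  obtain ⟨hi1, hiN⟩ := mem_Icc.mp hi
  rcases hi1.eq_or_lt with rfl | hi2
  · simp only [nodeState, Nat.sub_self, if_true, true_and, decide_eq_false_iff_not, not_and,
      mem_biUnion, mem_Ioc]
    refine ⟨fun h => ?_, fun h h' => absurd h h'⟩
    by_contra h1
    obtain ⟨j, hj, htj⟩ := hcover
    obtain rfl | hj1 := (mem_Icc.mp hj).1.eq_or_lt
    · exact h1 htj
    · exact h h1 ⟨j, ⟨hj1, (mem_Icc.mp hj).2⟩, htj⟩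
  · rw [nodeState_relayState I t (mem_Icc.mpr ⟨by omega, by omega⟩)]
    simp only [decide_eq_true_eq, decide_eq_false_iff_not, not_and, mem_biUnion,
      mem_Ioc]
    constructor
    · rintro ⟨⟨-, j, hj, htj⟩, h⟩
      by_contra hti
      obtain rfl | hij := (show i - 1 + 1 ≤ j by omega).eq_or_lt
      · exact hti (by rwa [Nat.sub_add_cancel hi1] at htj)
      · exact h hti ⟨j, ⟨by omega, hj.2⟩, htj⟩
    · intro hti
      have hprev := hdisj (i - 1) (mem_Icc.mpr ⟨by omega, by omega⟩)
      rw [Nat.sub_add_cancel hi1] at hprev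
      exact ⟨⟨disjoint_right.mp hprev hti, i, ⟨by omega, hiN⟩, hti⟩, fun h => absurd hti h⟩

lemma relayState_eq_of_forall_mem_iff (I : ℕ → Finset T) {t t' : T}
    (h : ∀ i ∈ Icc 1 (N + 1), t ∈ I i ↔ t' ∈ I i) :
    relayState (N := N) I t = relayState I t' := by
  funext k
  have hk := k.2
  refine decide_eq_decide.mpr
    (and_congr (not_congr (h _ (mem_Icc.mpr ⟨by omega, by omega⟩))) ?_)
  simp only [mem_biUnion, mem_Ioc]
  exact exists_congr fun j => and_congr_right fun hj => h j (mem_Icc.mpr ⟨by omega, hj.2⟩)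

end RelayState

section SlotSchedule

variable {N : ℕ} {T : Type*} [Fintype T]

noncomputable def slotSchedule (σ : T → Fin N → Bool) (s : Fin N → Bool) : ℝ :=
  #{t | σ t = s} / Fintype.card T

lemma slotSchedule_nonneg (σ : T → Fin N → Bool) (s : Fin N → Bool) : 0 ≤ slotSchedule σ s := by
  unfold slotSchedule; positivity

lemma sum_slotSchedule [Nonempty T] (σ : T → Fin N → Bool) : ∑ s, slotSchedule σ s = 1 := by
  simp only [slotSchedule, ← sum_div]
  rw [← Nat.cast_sum, ← card_eq_sum_card_fiberwise fun _ _ => mem_univ _, card_univ]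
  exact div_self (Nat.cast_ne_zero.mpr Fintype.card_ne_zero)

lemma linkTime_slotSchedule (σ : T → Fin N → Bool) (i : ℕ) :
    linkTime N (slotSchedule σ) i = #{t | linkActive N (σ t) i} / Fintype.card T := by
  simp only [linkTime, slotSchedule, ← sum_div]
  rw [card_eq_sum_card_fiberwise (f := σ) (t := univ.filter fun s => linkActive N s i)
    fun t ht => by simpa using ht]
  push_cast
  refine congrArg (· / _) (sum_congr rfl fun s hs => ?_)
  rw [filter_filter]
  refine congrArg (fun u : Finset T => (#u : ℝ)) (filter_congr fun t _ => ?_)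
  rw [mem_filter] at hs
  exact ⟨fun h => ⟨h ▸ hs.2, h⟩, And.right⟩

lemma ncard_support_slotSchedule_le (σ : T → Fin N → Bool) :
    {s | slotSchedule σ s ≠ 0}.ncard ≤ #(univ.image σ) := by
  rw [← Set.ncard_coe_finset]
  refine Set.ncard_le_ncard (fun s hs => ?_) (Set.toFinite _)
  obtain ⟨t, ht⟩ : ({t | σ t = s} : Finset T).Nonempty := by
    by_contra h
    simp_all [slotSchedule, not_nonempty_iff_eq_empty]
  simp only [coe_image, coe_univ, Set.image_univ, Set.mem_range]
  exact ⟨t, (mem_filter.mp ht).2⟩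

end SlotSchedule

lemma exists_mem_apply_eq_of_sub_natCast_mem {G α : Type*} [AddCommGroupWithOne G] {f : G → α}
    {B : Set G} (hf : ∀ x ∉ B, f x = f (x - 1)) (k : ℕ) :
    ∀ t : G, t - k ∈ B → ∃ b ∈ B, f t = f b := by
  induction k with
  | zero => exact fun t ht => ⟨t, by simpa using ht, rfl⟩
  | succ k ih =>
    intro t ht
    by_cases htB : t ∈ B
    · exact ⟨t, htB, rfl⟩
    · obtain ⟨b, hb, hfb⟩ := ih (t - 1) (by rwa [sub_sub, add_comm, ← Nat.cast_add_one])
      exact ⟨b, hb, (hf t htB).trans hfb⟩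

lemma ZMod.image_univ_subset_image_of_apply_sub_one {D : ℕ} [NeZero D] {α : Type*}
    [DecidableEq α] {f : ZMod D → α} {B : Finset (ZMod D)} (hB : B.Nonempty)
    (hf : ∀ x ∉ B, f x = f (x - 1)) : univ.image f ⊆ B.image f := by
  obtain ⟨b₀, hb₀⟩ := hB
  simp only [subset_iff, mem_image, mem_univ, true_and, forall_exists_index,
    forall_apply_eq_imp_iff]
  intro t
  obtain ⟨b, hb, hfb⟩ := exists_mem_apply_eq_of_sub_natCast_mem (B := (B : Set (ZMod D))) hf
    (t - b₀).val t (by simpa [ZMod.natCast_zmod_val] using hb₀)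
  exact ⟨b, hb, hfb.symm⟩

/-- `partialSum n i = n 1 + ⋯ + n i`. -/
def partialSum (n : ℕ → ℕ) (i : ℕ) : ℕ := ∑ k ∈ range i, n (k + 1)

lemma partialSum_sub_one_add {n : ℕ → ℕ} {i : ℕ} (hi : 1 ≤ i) :
    partialSum n (i - 1) + n i = partialSum n i := by
  obtain ⟨k, rfl⟩ := Nat.exists_eq_add_of_le' hi
  exact (sum_range_succ _ k).symm

lemma partialSum_mono (n : ℕ → ℕ) : Monotone (partialSum n) := fun _ _ h =>
  sum_le_sum_of_subset (range_subset_range.mpr h)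

lemma add_succ_le_partialSum (n : ℕ → ℕ) {j N : ℕ} (hj : j ∈ Icc 1 N) :
    n j + n (j + 1) ≤ partialSum n (N + 1) := by
  have hj1 := (mem_Icc.mp hj).1
  calc n j + n (j + 1) ≤ partialSum n (j - 1) + n j + n (j + 1) := by omega
    _ = partialSum n (j + 1) := by
        have h := partialSum_sub_one_add (n := n) (i := j + 1) (by omega)
        rw [Nat.add_sub_cancel] at h
        rw [partialSum_sub_one_add hj1, h]
    _ ≤ partialSum n (N + 1) := partialSum_mono n (by have := (mem_Icc.mp hj).2; omega)

lemma exists_mem_Icc_partialSum_le_lt {n : ℕ → ℕ} {x : ℕ} {k : ℕ} (hx : x < partialSum n k) :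
    ∃ i ∈ Icc 1 k, partialSum n (i - 1) ≤ x ∧ x < partialSum n i := by
  induction k with
  | zero => simp [partialSum] at hx
  | succ k ih =>
    by_cases hxk : x < partialSum n k
    · obtain ⟨i, hi, hix⟩ := ih hxk
      exact ⟨i, Icc_subset_Icc_right k.le_succ hi, hix⟩
    · exact ⟨k + 1, by simp, by simpa using hxk, hx⟩

section LinkArcs

variable {N : ℕ} {n : ℕ → ℕ} {D : ℕ}

variable (n D) in
def arcEndpoints (N : ℕ) : Finset (ZMod D) :=
  (range (N + 2)).image fun i => (partialSum n i : ZMod D)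

lemma card_arcEndpoints_le (hmax : ∃ j ∈ Icc 1 N, n j + n (j + 1) = D) :
    #(arcEndpoints n D N) ≤ N + 1 := by
  obtain ⟨j, hj, hjD⟩ := hmax
  have hj1 := (mem_Icc.mp hj).1
  -- links `j` and `j + 1` together fill a whole cycle
  have hwrap : (partialSum n (j + 1) : ZMod D) = partialSum n (j - 1) := by
    rw [← partialSum_sub_one_add (by omega : 1 ≤ j + 1), Nat.add_sub_cancel,
      ← partialSum_sub_one_add hj1, add_assoc, hjD, Nat.cast_add, ZMod.natCast_self, add_zero]
  have hsub : arcEndpoints n D N ⊆ ((range (N + 2)).erase (j + 1)).image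
      fun i => (partialSum n i : ZMod D) := by
    simp only [arcEndpoints, subset_iff, mem_image, mem_erase, mem_range]
    rintro _ ⟨i, hi, rfl⟩
    by_cases h : i = j + 1
    · exact ⟨j - 1, ⟨by omega, by omega⟩, by rw [h, hwrap]⟩
    · exact ⟨i, ⟨h, hi⟩, rfl⟩
  calc #(arcEndpoints n D N) ≤ #((range (N + 2)).erase (j + 1)) :=
        (card_le_card hsub).trans card_image_le
    _ = N + 1 := by
        rw [card_erase_of_mem (mem_range.mpr (by have := (mem_Icc.mp hj).2; omega)), card_range]
        rfl

variable [NeZero D]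

variable (n D) in
def linkArc (i : ℕ) : Finset (ZMod D) := ZMod.arc (partialSum n (i - 1) : ZMod D) (n i)

lemma exists_mem_linkArc (hcov : D ≤ partialSum n (N + 1)) (t : ZMod D) :
    ∃ j ∈ Icc 1 (N + 1), t ∈ linkArc n D j := by
  obtain ⟨j, hj, hlo, hhi⟩ := exists_mem_Icc_partialSum_le_lt (hcov.trans_lt' t.val_lt)
  rw [← partialSum_sub_one_add (mem_Icc.mp hj).1] at hhi
  exact ⟨j, hj, ZMod.mem_arc_of_le_of_lt hlo hhi⟩

lemma disjoint_linkArc_succ (hle : ∀ j ∈ Icc 1 N, n j + n (j + 1) ≤ D) {j : ℕ}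
    (hj : j ∈ Icc 1 N) : Disjoint (linkArc n D j) (linkArc n D (j + 1)) := by
  rw [linkArc, linkArc, Nat.add_sub_cancel, ← partialSum_sub_one_add (mem_Icc.mp hj).1,
    Nat.cast_add]
  exact ZMod.disjoint_arc_arc _ (hle j hj)

lemma relayState_linkArc_eq_sub_one {x : ZMod D} (hx : x ∉ arcEndpoints n D N) :
    relayState (N := N) (linkArc n D) x = relayState (linkArc n D) (x - 1) := by
  have hmem : ∀ i ≤ N + 1, (partialSum n i : ZMod D) ∈ arcEndpoints n D N := fun i hi =>
    mem_image_of_mem _ (mem_range.mpr (by omega))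
  refine relayState_eq_of_forall_mem_iff _ fun i hi => ZMod.mem_arc_iff_sub_one ?_ ?_
  · rintro rfl
    exact hx (hmem _ (by have := (mem_Icc.mp hi).2; omega))
  · rintro rfl
    rw [← Nat.cast_add, partialSum_sub_one_add (mem_Icc.mp hi).1] at hx
    exact hx (hmem _ (mem_Icc.mp hi).2)

end LinkArcs

theorem exists_simple_schedule_s6 {N : ℕ} (n : ℕ → ℕ) {D : ℕ} (hD : 0 < D)
    (hle : ∀ j ∈ Icc 1 N, n j + n (j + 1) ≤ D) (hmax : ∃ j ∈ Icc 1 N, n j + n (j + 1) = D) :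
    ∃ lam : (Fin N → Bool) → ℝ,
      (∀ s, 0 ≤ lam s) ∧ (∑ s, lam s) = 1 ∧
      {s : Fin N → Bool | lam s ≠ 0}.ncard ≤ N + 1 ∧
      ∀ i ∈ Icc 1 (N + 1), linkTime N lam i = n i / D := by
  have : NeZero D := ⟨hD.ne'⟩
  obtain ⟨j, hj, hjD⟩ := hmax
  have hN : 1 ≤ N := (mem_Icc.mp hj).1.trans (mem_Icc.mp hj).2
  have hcov : D ≤ partialSum n (N + 1) := hjD ▸ add_succ_le_partialSum n hj
  have hn_le : ∀ i ∈ Icc 1 (N + 1), n i ≤ D := by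
    intro i hi
    obtain ⟨hi1, hiN⟩ := mem_Icc.mp hi
    rcases hiN.lt_or_eq with hiN | rfl
    · exact (Nat.le_add_right _ _).trans (hle i (mem_Icc.mpr ⟨hi1, by omega⟩))
    · exact (Nat.le_add_left _ _).trans (hle N (mem_Icc.mpr ⟨hN, le_rfl⟩))
  set σ := relayState (N := N) (linkArc n D)
  refine ⟨slotSchedule σ, slotSchedule_nonneg σ, sum_slotSchedule σ, ?_, fun i hi => ?_⟩
  · calc {s | slotSchedule σ s ≠ 0}.ncard ≤ #(univ.image σ) := ncard_support_slotSchedule_le σ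
      _ ≤ #((arcEndpoints n D N).image σ) := card_le_card <|
          ZMod.image_univ_subset_image_of_apply_sub_one (nonempty_range_add_one.image _)
            fun x hx => relayState_linkArc_eq_sub_one hx
      _ ≤ N + 1 := card_image_le.trans (card_arcEndpoints_le ⟨j, hj, hjD⟩)
  · rw [linkTime_slotSchedule, ZMod.card,
      filter_congr fun t _ => linkActive_relayState_iff _ t (exists_mem_linkArc hcov t)
        (fun j hj => disjoint_linkArc_succ hle hj) hi,
      filter_mem_eq_inter, univ_inter, linkArc, ZMod.card_arc _ (hn_le i hi)]

/-- For integer link capacities with common multiple `M`, setting `n_i = M / ℓ_i` and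
`Δ = max_{i ∈ [1,N]} (n_i + n_{i+1})`, there is a simple schedule (support of size at most
`N+1`) with `Σ_{s ∈ S_i} λ_s = n_i / Δ` for every link `i`. -/
theorem exists_simple_schedule_integer (N : ℕ) (hN : 1 ≤ N) (ℓ : ℕ → ℕ)
    (hℓ : ∀ i ∈ Finset.Icc 1 (N + 1), 0 < ℓ i)
    (M : ℕ) (hM : 0 < M) (hdvd : ∀ i ∈ Finset.Icc 1 (N + 1), ℓ i ∣ M) :
    ∃ lam : (Fin N → Bool) → ℝ,
      (∀ s, 0 ≤ lam s) ∧ (∑ s, lam s) = 1 ∧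
      {s : Fin N → Bool | lam s ≠ 0}.ncard ≤ N + 1 ∧
      ∀ i ∈ Finset.Icc 1 (N + 1),
        linkTime N lam i =
          (M / ℓ i : ℕ) /
            (((Finset.Icc 1 N).sup' (Finset.nonempty_Icc.mpr hN)
              (fun j => M / ℓ j + M / ℓ (j + 1)) : ℕ) : ℝ) := by
  have h1 : 1 ∈ Icc 1 N := mem_Icc.mpr ⟨le_rfl, hN⟩
  have hn1 : 0 < M / ℓ 1 :=
    Nat.div_pos (Nat.le_of_dvd hM (hdvd 1 (by simp))) (hℓ 1 (by simp))
  obtain ⟨j, hj, hjmax⟩ :=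
    exists_mem_eq_sup' (nonempty_Icc.mpr hN) fun j => M / ℓ j + M / ℓ (j + 1)
  exact exists_simple_schedule_s6 (fun i => M / ℓ i)
    (hn1.trans_le ((Nat.le_add_right _ _).trans
      (le_sup' (fun j => M / ℓ j + M / ℓ (j + 1)) h1)))
    (fun j hj => le_sup' (fun j => M / ℓ j + M / ℓ (j + 1)) hj) ⟨j, hj, hjmax.symm⟩
end

section
/- Let N ≥ 1 be an integer and let ℓ_1, …, ℓ_{N+1} be positive integers. Let M be a common multiple of ℓ_1, …, ℓ_{N+1}, set n_i = M/ℓ_i for i ∈ {1,…,N+1}, and set Δ = max_{i∈{1,…,N}} (n_i + n_{i+1}). If a schedule λ satisfies Σ_{s∈S_i} λ_s = n_i/Δ for every i ∈ {1,…,N+1}, then its rate is C^λ = M/Δ, and moreover M/Δ = min_{i∈{1,…,N}} ℓ_i·ℓ_{i+1}/(ℓ_i + ℓ_{i+1}). -/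
/-!
Every link carries `(n_i / Δ) ℓ_i = M / Δ`, so the rate is `M / Δ`. Since `Δ` is the largest of
the `n_i + n_{i+1}` and `x ↦ M / x` is antitone, `M / Δ` is the smallest of the
`M / (M / ℓ_i + M / ℓ_{i+1}) = ℓ_i ℓ_{i+1} / (ℓ_i + ℓ_{i+1})`.
-/

open Finset

theorem rate_eq_of_forall_linkTime_mul_eq {N : ℕ} {ℓ : ℕ → ℝ} {lam : (Fin N → Bool) → ℝ} {c : ℝ}
    (h : ∀ i ∈ Icc 1 (N + 1), linkTime N lam i * ℓ i = c) : rate N ℓ lam = c := by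
  unfold rate
  exact (inf'_congr _ rfl h).trans (inf'_const _ c)

theorem Finset.div_sup'_eq_inf'_div {ι K : Type*} [Field K] [LinearOrder K] [IsStrictOrderedRing K]
    {s : Finset ι} (H : s.Nonempty) {f : ι → K} (hf : ∀ i ∈ s, 0 < f i) {c : K} (hc : 0 ≤ c) :
    c / s.sup' H f = s.inf' H (fun i => c / f i) := by
  obtain ⟨i, hi, hmax⟩ := exists_mem_eq_sup' H f
  refine le_antisymm (le_inf' H _ fun j hj => ?_) (hmax ▸ inf'_le _ hi)
  exact div_le_div_of_nonneg_left hc (hf j hj) (le_sup' f hj)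

theorem div_div_add_div_eq_mul_div_add {K : Type*} [Field K] {M a b : K} (hM : M ≠ 0) (ha : a ≠ 0) (hb : b ≠ 0) :
    M / (M / a + M / b) = a * b / (a + b) := by
  field_simp
  ring

theorem rate_of_schedule_integer_general (N : ℕ) (hN : 1 ≤ N) (ℓ : ℕ → ℕ)
    (M : ℕ) (hM : 0 < M) (hdvd : ∀ i ∈ Finset.Icc 1 (N + 1), ℓ i ∣ M)
    (lam : (Fin N → Bool) → ℝ)
    (htime : ∀ i ∈ Finset.Icc 1 (N + 1),
      linkTime N lam i =
        (M / ℓ i : ℕ) /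
          (((Finset.Icc 1 N).sup' (Finset.nonempty_Icc.mpr hN)
            (fun j => M / ℓ j + M / ℓ (j + 1)) : ℕ) : ℝ)) :
    rate N (fun i => (ℓ i : ℝ)) lam =
        (M : ℝ) /
          (((Finset.Icc 1 N).sup' (Finset.nonempty_Icc.mpr hN)
            (fun j => M / ℓ j + M / ℓ (j + 1)) : ℕ) : ℝ) ∧
      (M : ℝ) /
          (((Finset.Icc 1 N).sup' (Finset.nonempty_Icc.mpr hN)
            (fun j => M / ℓ j + M / ℓ (j + 1)) : ℕ) : ℝ) =
        (Finset.Icc 1 N).inf' (Finset.nonempty_Icc.mpr hN)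
          (fun i => (ℓ i : ℝ) * (ℓ (i + 1) : ℝ) / ((ℓ i : ℝ) + (ℓ (i + 1) : ℝ))) := by
  have hℓ : ∀ i ∈ Icc 1 (N + 1), (0 : ℝ) < ℓ i := fun i hi =>
    Nat.cast_pos.mpr (Nat.pos_of_dvd_of_pos (hdvd i hi) hM)
  have hn : ∀ i ∈ Icc 1 (N + 1), ((M / ℓ i : ℕ) : ℝ) = M / ℓ i := fun i hi =>
    Nat.cast_div (hdvd i hi) (hℓ i hi).ne'
  have hlinks : ∀ i ∈ Icc 1 N, i ∈ Icc 1 (N + 1) ∧ i + 1 ∈ Icc 1 (N + 1) := fun i hi => by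
    simp only [mem_Icc] at hi ⊢
    omega
  refine ⟨rate_eq_of_forall_linkTime_mul_eq fun i hi => ?_, ?_⟩
  · rw [htime i hi, hn i hi]
    field_simp [(hℓ i hi).ne']
  · rw [apply_sup'_eq_sup'_comp _ _ Nat.cast_max]
    have hpair : ∀ i ∈ Icc 1 N, ((M / ℓ i + M / ℓ (i + 1) : ℕ) : ℝ) = M / ℓ i + M / ℓ (i + 1) :=
      fun i hi => by rw [Nat.cast_add, hn i (hlinks i hi).1, hn (i + 1) (hlinks i hi).2]
    rw [div_sup'_eq_inf'_div _ _ M.cast_nonneg]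
    · refine inf'_congr _ rfl fun i hi => ?_
      obtain ⟨hi₀, hi₁⟩ := hlinks i hi
      rw [Function.comp_apply, hpair i hi]
      exact div_div_add_div_eq_mul_div_add (by positivity) (hℓ i hi₀).ne' (hℓ (i + 1) hi₁).ne'
    · intro i hi
      obtain ⟨hi₀, hi₁⟩ := hlinks i hi
      have := hℓ i hi₀
      have := hℓ (i + 1) hi₁
      rw [Function.comp_apply, hpair i hi]
      positivity

/-- If a schedule satisfies `Σ_{s ∈ S_i} λ_s = n_i / Δ` for every link `i`, where
`n_i = M / ℓ_i` and `Δ = max_{i ∈ [1,N]} (n_i + n_{i+1})`, then its rate is `M / Δ`,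
which equals `min_{i ∈ [1,N]} ℓ_i ℓ_{i+1} / (ℓ_i + ℓ_{i+1})`. -/
theorem rate_of_schedule_integer (N : ℕ) (hN : 1 ≤ N) (ℓ : ℕ → ℕ)
    (hℓ : ∀ i ∈ Finset.Icc 1 (N + 1), 0 < ℓ i)
    (M : ℕ) (hM : 0 < M) (hdvd : ∀ i ∈ Finset.Icc 1 (N + 1), ℓ i ∣ M)
    (lam : (Fin N → Bool) → ℝ) (hlam : ∀ s, 0 ≤ lam s) (hsum : (∑ s, lam s) = 1)
    (htime : ∀ i ∈ Finset.Icc 1 (N + 1),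
      linkTime N lam i =
        (M / ℓ i : ℕ) /
          (((Finset.Icc 1 N).sup' (Finset.nonempty_Icc.mpr hN)
            (fun j => M / ℓ j + M / ℓ (j + 1)) : ℕ) : ℝ)) :
    rate N (fun i => (ℓ i : ℝ)) lam =
        (M : ℝ) /
          (((Finset.Icc 1 N).sup' (Finset.nonempty_Icc.mpr hN)
            (fun j => M / ℓ j + M / ℓ (j + 1)) : ℕ) : ℝ) ∧
      (M : ℝ) /
          (((Finset.Icc 1 N).sup' (Finset.nonempty_Icc.mpr hN)
            (fun j => M / ℓ j + M / ℓ (j + 1)) : ℕ) : ℝ) =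
        (Finset.Icc 1 N).inf' (Finset.nonempty_Icc.mpr hN)
          (fun i => (ℓ i : ℝ) * (ℓ (i + 1) : ℝ) / ((ℓ i : ℝ) + (ℓ (i + 1) : ℝ))) :=
  rate_of_schedule_integer_general N hN ℓ M hM hdvd lam htime
end

section
/- Let N ≥ 1 be an integer and let B be a nonempty punctured subset of [1, N+1]. Define the cut A_B = {i ∈ {1,…,N} : i > max B} ∪ (B \ {N+1}). Then the crossing set of A_B is exactly B, i.e., E(A_B) = B. -/
/-!
For `i ∈ B`, the predecessor `i - 1` lies outside `B` (punctured) and below `max B`, so it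
misses `A_B`. For `i ∉ B` with `i ∈ A_B ∪ {N+1}` we get `max B < i`, and then `i - 1 ∈ A_B`.
-/

open Finset

/-- A set of naturals is punctured if it contains no two consecutive integers. -/
def Punctured (H : Finset ℕ) : Prop := ∀ i ∈ H, i + 1 ∉ H

/-- The cut `A_B` of the statement. -/
def cutOf (N : ℕ) (B : Finset ℕ) (hB : B.Nonempty) : Finset ℕ :=
  ((Icc 1 N).filter (fun i => B.max' hB < i)) ∪ (B \ {N + 1})

theorem mem_crossing {N : ℕ} {A : Finset ℕ} {i : ℕ} :
    i ∈ crossing N A ↔ i ∈ Icc 1 (N + 1) ∧ (i ∈ A ∨ i = N + 1) ∧ (i = 1 ∨ i - 1 ∉ A) := by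
  simp only [crossing, mem_filter, mem_Icc]
  constructor
  · rintro ⟨hi, hA, hprev | ⟨-, hprev⟩⟩
    exacts [⟨hi, hA, .inl (by omega)⟩, ⟨hi, hA, .inr hprev⟩]
  · rintro ⟨hi, hA, hprev⟩
    refine ⟨hi, hA, ?_⟩
    rcases eq_or_ne i 1 with h1 | h1
    exacts [.inl (by omega), .inr ⟨by omega, hprev.resolve_left h1⟩]

section cutOf

variable {N : ℕ} {B : Finset ℕ} {hB : B.Nonempty} {j : ℕ}

theorem mem_cutOf_of_max'_le (hMj : B.max' hB ≤ j) (hjN : j ≤ N) : j ∈ cutOf N B hB := by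
  rcases hMj.lt_or_eq with hlt | rfl
  · have hj : 1 ≤ j := by omega
    exact mem_union_left _ (mem_filter.2 ⟨mem_Icc.2 ⟨hj, hjN⟩, hlt⟩)
  · exact mem_union_right _ (mem_sdiff.2 ⟨B.max'_mem hB, by simp only [mem_singleton]; omega⟩)

theorem mem_cutOf_or_eq_of_mem (hj : j ∈ B) : j ∈ cutOf N B hB ∨ j = N + 1 := by
  by_cases hjN : j = N + 1
  exacts [.inr hjN, .inl (mem_union_right _ (mem_sdiff.2 ⟨hj, by simpa using hjN⟩))]

theorem max'_lt_of_notMem (hsub : B ⊆ Icc 1 (N + 1)) (hj : j ∈ cutOf N B hB ∨ j = N + 1)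
    (hjB : j ∉ B) : B.max' hB < j := by
  rcases hj with hj | rfl
  · rcases mem_union.1 hj with hj | hj
    · exact (mem_filter.1 hj).2
    · exact absurd (mem_sdiff.1 hj).1 hjB
  · have hMB := B.max'_mem hB
    have hM := (mem_Icc.1 (hsub hMB)).2
    exact hM.lt_of_ne fun h => hjB (h ▸ hMB)

theorem notMem_cutOf_of_succ_mem (hpunct : Punctured B) (hj : j + 1 ∈ B) : j ∉ cutOf N B hB := by
  have hjM : j < B.max' hB := B.le_max' _ hj
  simp only [cutOf, mem_union, mem_filter, mem_sdiff, not_or, not_and]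
  exact ⟨fun _ hMj => (lt_asymm hjM hMj).elim, fun hjB => (hpunct j hjB hj).elim⟩

end cutOf

theorem crossing_of_punctured_general (N : ℕ) (B : Finset ℕ) (hB : B.Nonempty)
    (hsub : B ⊆ Finset.Icc 1 (N + 1)) (hpunct : Punctured B) :
    crossing N (((Finset.Icc 1 N).filter (fun i => B.max' hB < i)) ∪ (B \ {N + 1})) = B := by
  change crossing N (cutOf N B hB) = B
  have hM : 1 ≤ B.max' hB := (mem_Icc.1 (hsub (B.max'_mem hB))).1
  ext i
  rw [mem_crossing]
  constructor
  · rintro ⟨hi, hA, hprev⟩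
    by_contra hiB
    have hMi := max'_lt_of_notMem hsub hA hiB
    have hi' := mem_Icc.1 hi
    have hprevA : i - 1 ∈ cutOf N B hB := mem_cutOf_of_max'_le (by omega) (by omega)
    rcases hprev with rfl | hprev
    exacts [absurd hMi (by omega), hprev hprevA]
  · intro hiB
    have hi := mem_Icc.1 (hsub hiB)
    refine ⟨hsub hiB, mem_cutOf_or_eq_of_mem hiB, ?_⟩
    rcases eq_or_ne i 1 with h1 | h1
    · exact .inl h1
    · exact .inr (notMem_cutOf_of_succ_mem hpunct (by rwa [Nat.sub_add_cancel hi.1]))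

/-- For a nonempty punctured subset `B` of `[1, N+1]`, the cut
`A_B = {i ∈ [1,N] : i > max B} ∪ (B \ {N+1})` has crossing set exactly `B`. -/
theorem crossing_of_punctured (N : ℕ) (hN : 1 ≤ N) (B : Finset ℕ) (hB : B.Nonempty)
    (hsub : B ⊆ Finset.Icc 1 (N + 1)) (hpunct : Punctured B) :
    crossing N (((Finset.Icc 1 N).filter (fun i => B.max' hB < i)) ∪ (B \ {N + 1})) = B :=
  crossing_of_punctured_general N B hB hsub hpunct
end

section
/- For every integer N ≥ 4, the number of primitive punctured subsets satisfies the recurrence T(N) = T(N−2) + T(N−3). -/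
open Finset

instance : DecidablePred Punctured := fun _ => Finset.decidableDforallFinset

/-- A primitive punctured subset of `[1,n]`: a punctured subset of `[1,n]` that is
maximal, i.e. no element of `[1,n]` can be added keeping it punctured. -/
def PrimitivePunctured (n : ℕ) (H : Finset ℕ) : Prop :=
  H ⊆ Finset.Icc 1 n ∧ Punctured H ∧
    ∀ i ∈ Finset.Icc 1 n, i ∉ H → ¬ Punctured (insert i H)

instance (n : ℕ) : DecidablePred (PrimitivePunctured n) := fun _ => by
  unfold PrimitivePunctured; infer_instance

/-- `T n` is the number of primitive punctured subsets of `[1,n]`. -/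
def T (n : ℕ) : ℕ := ((Finset.Icc 1 n).powerset.filter (PrimitivePunctured n)).card

/-!
Split the primitive punctured subsets `H` of `[1, n+4]` according to whether `n+4 ∈ H`.
If so, then `n+3 ∉ H`, and removing `n+4` is a bijection onto the primitive punctured subsets
of `[1, n+2]`. If not, maximality forces `n+3 ∈ H`, so `H` is a primitive punctured subset of
`[1, n+3]` containing its top element, and these correspond to the primitive punctured subsets
of `[1, n+1]` in the same way.
-/

lemma Punctured.mono {K H : Finset ℕ} (hKH : K ⊆ H) (hH : Punctured H) : Punctured K :=
  fun i hi hi' => hH i (hKH hi) (hKH hi')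

lemma Punctured.insert {a : ℕ} {K : Finset ℕ} (hK : Punctured K) (ha : a + 1 ∉ K)
    (hpred : ∀ b ∈ K, b + 1 ≠ a) : Punctured (insert a K) := by
  intro i hi
  simp only [mem_insert, not_or]
  rcases mem_insert.1 hi with rfl | hiK
  · exact ⟨by omega, ha⟩
  · exact ⟨hpred i hiK, hK i hiK⟩

lemma PrimitivePunctured.le {n : ℕ} {H : Finset ℕ} (h : PrimitivePunctured n H) {i : ℕ}
    (hi : i ∈ H) : i ≤ n :=
  (mem_Icc.1 (h.1 hi)).2

lemma PrimitivePunctured.notMem_of_lt {n : ℕ} {H : Finset ℕ} (h : PrimitivePunctured n H)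
    {i : ℕ} (hi : n < i) : i ∉ H :=
  fun hiH => by have := h.le hiH; omega

lemma primitivePunctured_insert_add_two_iff {n : ℕ} {H : Finset ℕ} (hH : n + 2 ∉ H) :
    PrimitivePunctured (n + 2) (insert (n + 2) H) ↔ PrimitivePunctured n H := by
  constructor
  · rintro ⟨hsub, hpunct, hmax⟩
    have hle : ∀ b ∈ H, b ≤ n := fun b hb => by
      have hb' := mem_Icc.1 (hsub (mem_insert_of_mem hb))
      have : b ≠ n + 2 := fun e => hH (e ▸ hb)
      have : b ≠ n + 1 := fun e => hpunct b (mem_insert_of_mem hb) (by simp [e])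
      omega
    refine ⟨fun b hb => mem_Icc.2 ⟨(mem_Icc.1 (hsub (mem_insert_of_mem hb))).1, hle b hb⟩,
      hpunct.mono (subset_insert _ _), fun i hi hiH hiPunct => ?_⟩
    have hi := mem_Icc.1 hi
    refine hmax i (mem_Icc.2 ⟨hi.1, by omega⟩) (by simp [hiH]; omega) ?_
    rw [insert_comm]
    refine hiPunct.insert ?_ fun b hb => ?_
    · simp only [mem_insert, not_or]
      exact ⟨by omega, fun h => by have := hle _ h; omega⟩
    · rcases mem_insert.1 hb with rfl | hb
      · omega
      · have := hle b hb; omega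
  · intro h
    refine ⟨?_, ?_, fun i hi hiH hiPunct => ?_⟩
    · exact insert_subset (by simp) (h.1.trans (Icc_subset_Icc_right (by omega)))
    · exact h.2.1.insert (h.notMem_of_lt (by omega)) (fun b hb => by have := h.le hb; omega)
    · have hi := mem_Icc.1 hi
      have hiH : i ≠ n + 2 ∧ i ∉ H := by simpa using hiH
      by_cases hin : i ≤ n
      · exact h.2.2 i (mem_Icc.2 ⟨hi.1, hin⟩) hiH.2
          (hiPunct.mono (insert_subset_insert _ (subset_insert _ _)))
      · exact hiPunct (n + 1) (by simp; omega) (by simp)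

lemma primitivePunctured_succ_iff_of_notMem {n : ℕ} {H : Finset ℕ} (hH : n + 1 ∉ H) :
    PrimitivePunctured (n + 1) H ↔ PrimitivePunctured n H ∧ n ∈ H := by
  constructor
  · rintro ⟨hsub, hpunct, hmax⟩
    have hle : ∀ b ∈ H, b ≤ n := fun b hb => by
      have := mem_Icc.1 (hsub hb)
      have : b ≠ n + 1 := fun e => hH (e ▸ hb)
      omega
    refine ⟨⟨fun b hb => mem_Icc.2 ⟨(mem_Icc.1 (hsub hb)).1, hle b hb⟩, hpunct,
      fun i hi => hmax i (Icc_subset_Icc_right (by omega) hi)⟩, ?_⟩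
    by_contra hn
    exact hmax (n + 1) (by simp) hH (hpunct.insert (fun h => by have := hle _ h; omega)
      (fun b hb e => hn (by rwa [show b = n by omega] at hb)))
  · rintro ⟨h, hn⟩
    refine ⟨h.1.trans (Icc_subset_Icc_right (by omega)), h.2.1, fun i hi hiH hiPunct => ?_⟩
    by_cases hin : i ≤ n
    · exact h.2.2 i (mem_Icc.2 ⟨(mem_Icc.1 hi).1, hin⟩) hiH hiPunct
    · have : i = n + 1 := by have := (mem_Icc.1 hi).2; omega
      subst this
      exact hiPunct n (mem_insert_of_mem hn) (mem_insert_self _ _)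

def primitivePuncturedSets (n : ℕ) : Finset (Finset ℕ) :=
  (Icc 1 n).powerset.filter (PrimitivePunctured n)

lemma mem_primitivePuncturedSets {n : ℕ} {H : Finset ℕ} :
    H ∈ primitivePuncturedSets n ↔ PrimitivePunctured n H := by
  simp only [primitivePuncturedSets, mem_filter, mem_powerset, and_iff_right_iff_imp]
  exact fun h => h.1

lemma T_eq_card (n : ℕ) : T n = #(primitivePuncturedSets n) := rfl

lemma filter_mem_primitivePuncturedSets_add_two (n : ℕ) :
    (primitivePuncturedSets (n + 2)).filter (n + 2 ∈ ·) =
      (primitivePuncturedSets n).image (insert (n + 2)) := by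
  ext H
  simp only [mem_filter, mem_image, mem_primitivePuncturedSets]
  constructor
  · rintro ⟨h, hH⟩
    rw [← insert_erase hH, primitivePunctured_insert_add_two_iff (notMem_erase _ _)] at h
    exact ⟨_, h, insert_erase hH⟩
  · rintro ⟨K, hK, rfl⟩
    exact ⟨(primitivePunctured_insert_add_two_iff (hK.notMem_of_lt (by omega))).2 hK,
      mem_insert_self _ _⟩

lemma card_filter_mem_primitivePuncturedSets_add_two (n : ℕ) :
    #((primitivePuncturedSets (n + 2)).filter (n + 2 ∈ ·)) = T n := by
  rw [filter_mem_primitivePuncturedSets_add_two, T_eq_card]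
  refine card_image_of_injOn fun K hK L hL hKL => ?_
  have hK := mem_primitivePuncturedSets.1 hK
  have hL := mem_primitivePuncturedSets.1 hL
  rw [← erase_insert (hK.notMem_of_lt (show n < n + 2 by omega)),
    ← erase_insert (hL.notMem_of_lt (show n < n + 2 by omega))]
  exact congrArg (erase · (n + 2)) hKL

lemma filter_notMem_primitivePuncturedSets_succ (n : ℕ) :
    (primitivePuncturedSets (n + 1)).filter (n + 1 ∉ ·) =
      (primitivePuncturedSets n).filter (n ∈ ·) := by
  ext H
  simp only [mem_filter, mem_primitivePuncturedSets]
  constructor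
  · rintro ⟨h, hH⟩
    exact (primitivePunctured_succ_iff_of_notMem hH).1 h
  · rintro ⟨h, hn⟩
    have hH := h.notMem_of_lt (Nat.lt_succ_self n)
    exact ⟨(primitivePunctured_succ_iff_of_notMem hH).2 ⟨h, hn⟩, hH⟩

/-- The number of primitive punctured subsets satisfies `T(N) = T(N-2) + T(N-3)`. -/
theorem T_recurrence (N : ℕ) (hN : 4 ≤ N) : T N = T (N - 2) + T (N - 3) := by
  obtain ⟨n, rfl⟩ : ∃ n, N = n + 4 := ⟨N - 4, by omega⟩
  rw [show n + 4 - 2 = n + 2 by omega, show n + 4 - 3 = n + 1 by omega, T_eq_card,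
    ← card_filter_add_card_filter_not (n + 4 ∈ ·),
    card_filter_mem_primitivePuncturedSets_add_two (n + 2),
    filter_notMem_primitivePuncturedSets_succ (n + 3),
    card_filter_mem_primitivePuncturedSets_add_two (n + 1)]
end

section
/- There exists a constant c > 0 such that for every integer N ≥ 1, the number of primitive punctured subsets of [1,N] satisfies T(N) ≥ c · 2^{N/3}; i.e., T(N) = Ω(2^{N/3}). -/
open Finset

/-!
A primitive punctured set of `[1, N]` extends to one of `[1, N + 3]` in two ways that are told apart
by `N + 2`: add `N + 2` alone, or add `N + 3` together with `N + 1` exactly when `N` is missing.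
Both extensions restrict back to the original set, so `T (N + 3) ≥ 2 T N`, whence
`T N ≥ 2 ^ ⌊N / 3⌋ ≥ 2 ^ (N / 3) / 2`.
-/

lemma Punctured.mono_s18 {S S' : Finset ℕ} (hS : Punctured S) (h : S' ⊆ S) : Punctured S' :=
  fun i hi hi1 => hS i (h hi) (h hi1)

lemma PrimitivePunctured.union {N M : ℕ} {H K : Finset ℕ} (hH : PrimitivePunctured N H)
    (hNM : N ≤ M) (hK : K ⊆ Icc (N + 1) M) (hKp : Punctured K) (hNK : N ∈ H → N + 1 ∉ K)
    (hcover : ∀ i ∈ Icc (N + 1) M, i ∉ K → i - 1 ∈ H ∪ K ∨ i + 1 ∈ K) :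
    PrimitivePunctured M (H ∪ K) := by
  obtain ⟨hHsub, hHp, hHmax⟩ := hH
  have hHle : ∀ i ∈ H, 1 ≤ i ∧ i ≤ N := fun i hi => mem_Icc.1 (hHsub hi)
  have hKge : ∀ i ∈ K, N + 1 ≤ i ∧ i ≤ M := fun i hi => mem_Icc.1 (hK hi)
  refine ⟨union_subset (hHsub.trans (Icc_subset_Icc_right hNM)) (hK.trans
    (Icc_subset_Icc_left (Nat.le_add_left 1 N))), ?_, ?_⟩
  · intro i hi hi1
    rcases mem_union.1 hi with hi | hi <;> rcases mem_union.1 hi1 with hi1 | hi1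
    · exact hHp i hi hi1
    · have := hHle i hi; have := hKge _ hi1
      exact hNK (by rwa [show i = N by omega] at hi) (by rwa [show i = N by omega] at hi1)
    · have := hKge i hi; have := hHle _ hi1; omega
    · exact hKp i hi hi1
  · intro i hi hiHK hpun
    rw [mem_union, not_or] at hiHK
    by_cases hiN : i ≤ N
    · exact hHmax i (mem_Icc.2 ⟨(mem_Icc.1 hi).1, hiN⟩) hiHK.1
        (hpun.mono_s18 (insert_subset_insert i subset_union_left))
    · rcases hcover i (mem_Icc.2 ⟨by omega, (mem_Icc.1 hi).2⟩) hiHK.2 with h | h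
      · exact hpun (i - 1) (mem_insert_of_mem h) (by rw [Nat.sub_add_cancel (by omega)]; simp)
      · exact hpun i (mem_insert_self _ _) (mem_insert_of_mem (mem_union_right _ h))

def extensionBlock (N : ℕ) (H : Finset ℕ) : Bool → Finset ℕ
  | true => {N + 2}
  | false => if N ∈ H then {N + 3} else {N + 1, N + 3}

lemma extensionBlock_subset_Icc (N : ℕ) (H : Finset ℕ) (b : Bool) :
    extensionBlock N H b ⊆ Icc (N + 1) (N + 3) := by
  cases b <;> simp only [extensionBlock] <;> try split_ifs
  all_goals intro i; simp only [mem_insert, mem_singleton, mem_Icc]; omega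

lemma PrimitivePunctured.union_extensionBlock {N : ℕ} {H : Finset ℕ} (hH : PrimitivePunctured N H)
    (b : Bool) : PrimitivePunctured (N + 3) (H ∪ extensionBlock N H b) := by
  refine hH.union (by omega) (extensionBlock_subset_Icc N H b) ?_ ?_ ?_
  · intro i hi hi1
    cases b <;> simp only [extensionBlock] at hi hi1 <;> try split_ifs at hi hi1
    all_goals simp only [mem_insert, mem_singleton] at hi hi1; omega
  · intro hN
    cases b <;> simp [extensionBlock, hN]
  · intro i hi hiK
    obtain rfl | rfl | rfl : i = N + 1 ∨ i = N + 2 ∨ i = N + 3 := by have := mem_Icc.1 hi; omega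
    all_goals by_cases hN : N ∈ H <;> cases b <;> simp_all [extensionBlock]

lemma filter_le_union_extensionBlock {N : ℕ} {H : Finset ℕ} (hH : H ⊆ Icc 1 N) (b : Bool) :
    (H ∪ extensionBlock N H b).filter (· ≤ N) = H := by
  ext i
  simp only [mem_filter, mem_union]
  constructor
  · rintro ⟨hi | hi, hle⟩
    · exact hi
    · exact absurd (mem_Icc.1 (extensionBlock_subset_Icc N H b hi)).1 (by omega)
  · exact fun hi => ⟨Or.inl hi, (mem_Icc.1 (hH hi)).2⟩

lemma add_two_mem_union_extensionBlock_iff {N : ℕ} {H : Finset ℕ} (hH : H ⊆ Icc 1 N) (b : Bool) :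
    N + 2 ∈ H ∪ extensionBlock N H b ↔ b = true := by
  have hN2 : N + 2 ∉ H := fun h => by have := (mem_Icc.1 (hH h)).2; omega
  cases b <;> simp only [extensionBlock] <;> try split_ifs
  all_goals simp [hN2]

lemma two_mul_T_le (N : ℕ) : 2 * T N ≤ T (N + 3) := by
  set P : ℕ → Finset (Finset ℕ) := fun n => (Icc 1 n).powerset.filter (PrimitivePunctured n)
  have hP : ∀ {n H}, H ∈ P n ↔ PrimitivePunctured n H := fun {n H} => by
    simp only [P, mem_filter, mem_powerset, and_iff_right_iff_imp]
    exact fun h => h.1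
  have hsub : ∀ p ∈ P N ×ˢ (univ : Finset Bool), p.1 ⊆ Icc 1 N :=
    fun p hp => (hP.1 (mem_product.1 hp).1).1
  calc 2 * T N = #(P N ×ˢ (univ : Finset Bool)) := by simp [T, P, mul_comm]
    _ ≤ T (N + 3) := by
      refine card_le_card_of_injOn (fun p => p.1 ∪ extensionBlock N p.1 p.2)
        (fun p hp => ?_) (fun p hp q hq hpq => ?_)
      · exact hP.2 ((hP.1 (mem_product.1 hp).1).union_extensionBlock p.2)
      · refine Prod.ext ?_ (Bool.eq_iff_iff.2 ?_)
        · rw [← filter_le_union_extensionBlock (hsub p hp) p.2,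
            ← filter_le_union_extensionBlock (hsub q hq) q.2]
          exact congrArg _ hpq
        · rw [← add_two_mem_union_extensionBlock_iff (hsub p hp),
            ← add_two_mem_union_extensionBlock_iff (hsub q hq)]
          exact iff_of_eq (congrArg (N + 2 ∈ ·) hpq)

lemma two_pow_div_three_le_T (N : ℕ) : 2 ^ (N / 3) ≤ T N := by
  induction N using Nat.strong_induction_on with
  | _ N ih =>
    obtain hN | ⟨M, rfl⟩ : N < 3 ∨ ∃ M, N = M + 3 := by
      rcases lt_or_ge N 3 with h | h
      · exact .inl h
      · exact .inr ⟨N - 3, by omega⟩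
    · interval_cases N <;> decide
    · calc 2 ^ ((M + 3) / 3) = 2 * 2 ^ (M / 3) := by rw [Nat.add_div_right M three_pos, pow_succ']
        _ ≤ 2 * T M := Nat.mul_le_mul_left 2 (ih M (by omega))
        _ ≤ T (M + 3) := two_mul_T_le M

/-- `T(N) = Ω(2^{N/3})`: there is a constant `c > 0` with `T(N) ≥ c · 2^{N/3}`
for all `N ≥ 1`. -/
theorem T_exponential_lower_bound :
    ∃ c : ℝ, 0 < c ∧ ∀ N : ℕ, 1 ≤ N → c * (2 : ℝ) ^ ((N : ℝ) / 3) ≤ (T N : ℝ) := by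
  refine ⟨1 / 2, by norm_num, fun N _ => ?_⟩
  have hexp : (N : ℝ) / 3 ≤ (N / 3 : ℕ) + 1 := by
    have : (N : ℝ) ≤ 3 * (N / 3 : ℕ) + 3 := by exact_mod_cast (by omega : N ≤ 3 * (N / 3) + 3)
    linarith
  calc 1 / 2 * (2 : ℝ) ^ ((N : ℝ) / 3) ≤ 1 / 2 * (2 : ℝ) ^ (((N / 3 : ℕ) : ℝ) + 1) := by
        gcongr
        norm_num
    _ = 2 ^ (N / 3) := by rw [Real.rpow_add two_pos, Real.rpow_natCast, Real.rpow_one]; ring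
    _ ≤ T N := by exact_mod_cast two_pow_div_three_le_T N
end
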